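/- arXiv:2503.03478 — 14 statements merged into one kernel-verified Lean document; each statement's English description precedes it below -/
import Mathlib

section
/- Let V be a real inner product space and Λ an additive subgroup (ℤ-submodule) of V. Suppose v₁, v₂ ∈ Λ are ℝ-linearly independent, v₁ satisfies ‖v₁‖ ≤ ‖w‖ for every nonzero w ∈ Λ, and v₂ satisfies ‖v₂‖ ≤ ‖w‖ for every w ∈ Λ such that {v₁, w} is ℝ-linearly independent. Then 2·|⟪v₂, v₁⟫| ≤ ‖v₁‖², i.e., the Gram–Schmidt coefficient μ₂,₁ = ⟪v₂, v₁⟫/‖v₁‖² satisfies |μ₂,₁| ≤ 1/2 (the pair {v₁, v₂} is size-reduced). -/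
open scoped RealInnerProductSpace

private lemma pair_indep_shift {V : Type*} [NormedAddCommGroup V] [InnerProductSpace ℝ V]
    (v₁ v₂ : V) (c : ℝ) (hind : LinearIndependent ℝ ![v₁, v₂]) :
    LinearIndependent ℝ ![v₁, v₂ + c • v₁] := by
  rw [LinearIndependent.pair_iff] at hind ⊢
  intro s t h
  have h' : (s + t * c) • v₁ + t • v₂ = 0 := by
    rw [smul_add, smul_smul] at h
    rw [add_smul]
    linear_combination (norm := module) h
  obtain ⟨h1, h2⟩ := hind _ _ h'
  constructor
  · subst h2; simpa using h1
  · exact h2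

/-- If `v₁, v₂` are linearly independent elements of an additive subgroup `Λ` of a real
inner product space, `v₁` is a shortest nonzero vector of `Λ`, and `v₂` is shortest among
vectors of `Λ` independent from `v₁`, then the pair `{v₁, v₂}` is size-reduced:
`2·|⟪v₂, v₁⟫| ≤ ‖v₁‖²`. -/
theorem stmt_1 {V : Type*} [NormedAddCommGroup V] [InnerProductSpace ℝ V]
    (Λ : AddSubgroup V) (v₁ v₂ : V) (hv₁ : v₁ ∈ Λ) (hv₂ : v₂ ∈ Λ)
    (hind : LinearIndependent ℝ ![v₁, v₂])
    (h₁ : ∀ w ∈ Λ, w ≠ 0 → ‖v₁‖ ≤ ‖w‖)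
    (h₂ : ∀ w ∈ Λ, LinearIndependent ℝ ![v₁, w] → ‖v₂‖ ≤ ‖w‖) :
    2 * |⟪v₂, v₁⟫| ≤ ‖v₁‖ ^ 2 := by
  rcases le_or_gt 0 ⟪v₂, v₁⟫ with hs | hs
  · rw [abs_of_nonneg hs]
    have hmem : v₂ - v₁ ∈ Λ := Λ.sub_mem hv₂ hv₁
    have hli : LinearIndependent ℝ ![v₁, v₂ - v₁] := by
      have := pair_indep_shift v₁ v₂ (-1) hind
      simpa [sub_eq_add_neg] using this
    have hle := h₂ _ hmem hli
    have hsq : ‖v₂‖ ^ 2 ≤ ‖v₂ - v₁‖ ^ 2 := by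
      apply pow_le_pow_left₀ (norm_nonneg _) hle
    rw [norm_sub_sq_real] at hsq
    linarith
  · rw [abs_of_neg hs]
    have hmem : v₂ + v₁ ∈ Λ := Λ.add_mem hv₂ hv₁
    have hli : LinearIndependent ℝ ![v₁, v₂ + v₁] := by
      have := pair_indep_shift v₁ v₂ 1 hind
      simpa using this
    have hle := h₂ _ hmem hli
    have hsq : ‖v₂‖ ^ 2 ≤ ‖v₂ + v₁‖ ^ 2 := by
      apply pow_le_pow_left₀ (norm_nonneg _) hle
    rw [norm_add_sq_real] at hsq
    linarith
end

section
/- Let V be a real inner product space and Λ an additive subgroup (ℤ-submodule) of V. Suppose v₁, v₂, v₃ ∈ Λ are ℝ-linearly independent, v₁ satisfies ‖v₁‖ ≤ ‖w‖ for every nonzero w ∈ Λ, v₂ satisfies ‖v₂‖ ≤ ‖w‖ for every w ∈ Λ such that {v₁, w} is ℝ-linearly independent, and v₃ satisfies ‖v₃‖ ≤ ‖w‖ for every w ∈ Λ such that {v₁, v₂, w} is ℝ-linearly independent. Then 2·|⟪v₃, v₁⟫| ≤ ‖v₁‖² and 2·|⟪v₃, v₂⟫| ≤ ‖v₂‖².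 -/
open scoped RealInnerProductSpace

lemma aux_li {V : Type*} [AddCommGroup V] [Module ℝ V] {a b c : V}
    (h : LinearIndependent ℝ ![a, b, c]) (r s : ℝ) :
    LinearIndependent ℝ ![a, b, c + r • a + s • b] := by
  rw [Fintype.linearIndependent_iff] at h ⊢
  intro g hg
  simp only [Fin.sum_univ_three, Matrix.cons_val_zero, Matrix.cons_val_one, Matrix.head_cons,
    Matrix.cons_val_two, Matrix.tail_cons] at hg
  have hg' : (g 0 + g 2 * r) • a + (g 1 + g 2 * s) • b + g 2 • c = 0 := by
    rw [← hg]; module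
  have := h ![g 0 + g 2 * r, g 1 + g 2 * s, g 2] (by
    simpa [Fin.sum_univ_three] using hg')
  have h2 : g 2 = 0 := by simpa using this 2
  have h0 : g 0 = 0 := by have := this 0; simp [h2] at this; simpa using this
  have h1 : g 1 = 0 := by have := this 1; simp [h2] at this; simpa using this
  intro i
  fin_cases i <;> assumption

lemma aux_key {V : Type*} [NormedAddCommGroup V] [InnerProductSpace ℝ V] (v₃ v : V)
    (h : ∀ ε : ℝ, ε = 1 ∨ ε = -1 → ‖v₃‖ ≤ ‖v₃ - ε • v‖) :
    2 * |⟪v₃, v⟫| ≤ ‖v‖ ^ 2 := by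
  have key : ∀ ε : ℝ, ε = 1 ∨ ε = -1 → 2 * (ε * ⟪v₃, v⟫) ≤ ‖v‖ ^ 2 := by
    intro ε hε
    have hle := h ε hε
    have hsq : ‖v₃‖ ^ 2 ≤ ‖v₃ - ε • v‖ ^ 2 := by
      have := sq_le_sq' (by linarith [norm_nonneg v₃, norm_nonneg (v₃ - ε • v)]) hle
      simpa using this
    have hexp : ‖v₃ - ε • v‖ ^ 2 = ‖v₃‖ ^ 2 - 2 * (ε * ⟪v₃, v⟫) + ‖v‖ ^ 2 := by
      rw [norm_sub_sq_real, real_inner_smul_right, norm_smul]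
      have : |ε| = 1 := by rcases hε with h | h <;> simp [h]
      rw [Real.norm_eq_abs, this]
      ring
    rw [hexp] at hsq
    linarith
  have p1 := key 1 (Or.inl rfl)
  have p2 := key (-1) (Or.inr rfl)
  rcases abs_cases ⟪v₃, v⟫ with ⟨he, _⟩ | ⟨he, _⟩ <;> rw [he] <;> linarith

/-- If `v₁, v₂, v₃` are linearly independent elements of an additive subgroup `Λ` of a real
inner product space attaining the successive minima (in the sense that `v₁` is a shortest
nonzero vector, `v₂` is shortest among vectors independent from `v₁`, and `v₃` is shortest
among vectors independent from `{v₁, v₂}`), then `2·|⟪v₃, v₁⟫| ≤ ‖v₁‖²` and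
`2·|⟪v₃, v₂⟫| ≤ ‖v₂‖²`. -/
theorem stmt_2 {V : Type*} [NormedAddCommGroup V] [InnerProductSpace ℝ V]
    (Λ : AddSubgroup V) (v₁ v₂ v₃ : V) (hv₁ : v₁ ∈ Λ) (hv₂ : v₂ ∈ Λ) (hv₃ : v₃ ∈ Λ)
    (hind : LinearIndependent ℝ ![v₁, v₂, v₃])
    (h₁ : ∀ w ∈ Λ, w ≠ 0 → ‖v₁‖ ≤ ‖w‖)
    (h₂ : ∀ w ∈ Λ, LinearIndependent ℝ ![v₁, w] → ‖v₂‖ ≤ ‖w‖)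
    (h₃ : ∀ w ∈ Λ, LinearIndependent ℝ ![v₁, v₂, w] → ‖v₃‖ ≤ ‖w‖) :
    2 * |⟪v₃, v₁⟫| ≤ ‖v₁‖ ^ 2 ∧ 2 * |⟪v₃, v₂⟫| ≤ ‖v₂‖ ^ 2 := by
  constructor
  · apply aux_key
    intro ε hε
    have hmem : v₃ - ε • v₁ ∈ Λ := by
      rcases hε with h | h <;> subst h <;> simp <;>
        [exact sub_mem hv₃ hv₁; exact add_mem hv₃ hv₁]
    have hli : LinearIndependent ℝ ![v₁, v₂, v₃ - ε • v₁] := by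
      have := aux_li hind (-ε) 0
      simpa [sub_eq_add_neg, neg_smul] using this
    exact h₃ _ hmem hli
  · apply aux_key
    intro ε hε
    have hmem : v₃ - ε • v₂ ∈ Λ := by
      rcases hε with h | h <;> subst h <;> simp <;>
        [exact sub_mem hv₃ hv₂; exact add_mem hv₃ hv₂]
    have hli : LinearIndependent ℝ ![v₁, v₂, v₃ - ε • v₂] := by
      have := aux_li hind 0 (-ε)
      simpa [sub_eq_add_neg, neg_smul] using this
    exact h₃ _ hmem hli
end

section
/- Let V be a real inner product space and let Λ be the ℤ-span of ℝ-linearly independent vectors β₁, β₂, β₃ ∈ V, and assume the inner product ⟪·,·⟫ takes integer values on Λ × Λ. Suppose (β₁, β₂, β₃) is a successive minimal basis of Λ, with successive minima D₁ = ‖β₁‖² ≤ D₂ = ‖β₂‖² ≤ D₃ = ‖β₃‖². Then there exist signs ε₂, ε₃ ∈ {1, −1} such that, setting x = ⟪β₁, ε₂β₂⟫, y = ⟪β₁, ε₃β₃⟫, z = ⟪ε₂β₂, ε₃β₃⟫, the values x, y, z are integers satisfying 0 ≤ x ≤ D₁/2, 0 ≤ y ≤ D₁/2, and |z| ≤ D₂/2;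 i.e., the basis (β₁, ε₂β₂, ε₃β₃) has Gram matrix [[D₁, x, y], [x, D₂, z], [y, z, D₃]] with these bounds. -/
/-!
If `β₂ ± β₁` were shorter than `β₂`, it would be a lattice vector independent of `β₁` beating the
second minimum; so `‖β₂‖² ≤ ‖β₂ ± β₁‖²`, which expands to `2|⟪β₁, β₂⟫| ≤ D₁`. In the same way
`β₃ ± β₁` and `β₃ ± β₂` are lattice vectors independent of `β₁, β₂`, and minimality of `D₃` gives
`2|⟪β₁, β₃⟫| ≤ D₁` and `2|⟪β₂, β₃⟫| ≤ D₂`. The signs of `β₂, β₃` are then chosen to make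
`⟪β₁, β₂⟫` and `⟪β₁, β₃⟫` nonnegative, which leaves `|⟪β₂, β₃⟫|` unchanged.
-/

open scoped RealInnerProductSpace

/-- The `i`-th successive minimum (squared-norm convention) of a `ℤ`-submodule `Λ` of a real
inner product space: the smallest `D` such that the `ℝ`-span of the vectors of `Λ` of squared
norm at most `D` has dimension at least `i`. -/
noncomputable def succMin {V : Type*} [NormedAddCommGroup V] [InnerProductSpace ℝ V]
    (Λ : Submodule ℤ V) (i : ℕ) : ℝ :=
  sInf {D : ℝ | i ≤ Module.finrank ℝ (Submodule.span ℝ {x : V | x ∈ Λ ∧ ‖x‖ ^ 2 ≤ D})}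

theorem LinearIndependent.triple_add_iff_of_mem_span {K M : Type*} [DivisionRing K]
    [AddCommGroup M] [Module K M] {x y z w : M} (hw : w ∈ Submodule.span K {x, y}) :
    LinearIndependent K ![x, y, w + z] ↔ LinearIndependent K ![x, y, z] := by
  have hsnoc (v : M) : ![x, y, v] = Fin.snoc ![x, y] v := by simp
  rw [hsnoc, hsnoc, linearIndependent_finSnoc, linearIndependent_finSnoc,
    Matrix.range_cons_cons_empty, Submodule.add_mem_iff_right _ hw]

theorem Submodule.FG.finiteDimensional_span_of_subset {V : Type*} [AddCommGroup V] [Module ℝ V]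
    {Λ : Submodule ℤ V} (hΛ : Λ.FG) {S : Set V} (hS : S ⊆ Λ) :
    FiniteDimensional ℝ (Submodule.span ℝ S) := by
  obtain ⟨s, rfl⟩ := hΛ
  have : FiniteDimensional ℝ (Submodule.span ℝ (s : Set V)) := FiniteDimensional.span_finset ℝ s
  refine Submodule.finiteDimensional_of_le (S₂ := Submodule.span ℝ (s : Set V)) ?_
  exact Submodule.span_le.2 fun x hx => Submodule.span_le_restrictScalars ℤ ℝ _ (hS hx)

section InnerProductSpace

variable {V : Type*} [NormedAddCommGroup V] [InnerProductSpace ℝ V]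

theorem two_mul_abs_inner_le_of_forall_int {u v : V}
    (h : ∀ c : ℤ, ‖v‖ ^ 2 ≤ ‖(c : ℝ) • u + v‖ ^ 2) : 2 * |⟪u, v⟫| ≤ ‖u‖ ^ 2 := by
  have hplus := h 1
  have hminus := h (-1)
  simp only [Int.cast_one, Int.cast_neg, one_smul, neg_one_smul, norm_add_sq_real,
    inner_neg_left, norm_neg] at hplus hminus
  cases abs_cases ⟪u, v⟫ <;> linarith

theorem bddBelow_setOf_le_finrank_span (Λ : Submodule ℤ V) {k : ℕ} (hk : 0 < k) :
    BddBelow {D : ℝ | k ≤ Module.finrank ℝ (Submodule.span ℝ {x : V | x ∈ Λ ∧ ‖x‖ ^ 2 ≤ D})} := by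
  refine ⟨0, fun D hD => ?_⟩
  by_contra! hD0
  have hempty : {x : V | x ∈ Λ ∧ ‖x‖ ^ 2 ≤ D} = ∅ :=
    Set.eq_empty_of_forall_notMem fun x hx => (hD0.trans_le (by positivity)).not_ge hx.2
  change k ≤ _ at hD
  rw [hempty, Submodule.span_empty, finrank_bot] at hD
  omega

theorem succMin_le {Λ : Submodule ℤ V} (hΛ : Λ.FG) {k : ℕ} (hk : 0 < k) {v : Fin k → V}
    (hv : LinearIndependent ℝ v) (hvΛ : ∀ i, v i ∈ Λ) {D : ℝ} (hvD : ∀ i, ‖v i‖ ^ 2 ≤ D) :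
    succMin Λ k ≤ D := by
  refine csInf_le (bddBelow_setOf_le_finrank_span Λ hk) ?_
  have := hΛ.finiteDimensional_span_of_subset (S := {x : V | x ∈ Λ ∧ ‖x‖ ^ 2 ≤ D}) fun _ hx => hx.1
  calc k = Module.finrank ℝ (Submodule.span ℝ (Set.range v)) := by
          rw [finrank_span_eq_card hv, Fintype.card_fin]
    _ ≤ _ := Submodule.finrank_mono (Submodule.span_mono ?_)
  rintro _ ⟨i, rfl⟩
  exact ⟨hvΛ i, hvD i⟩

variable {Λ : Submodule ℤ V} {b₁ b₂ b₃ w : V}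

theorem sq_norm_le_of_succMin_one (hΛ : Λ.FG) (h₁ : ‖b₁‖ ^ 2 = succMin Λ 1) (hw : w ∈ Λ)
    (hw₀ : w ≠ 0) : ‖b₁‖ ^ 2 ≤ ‖w‖ ^ 2 := by
  rw [h₁]
  refine succMin_le hΛ one_pos (.of_subsingleton 0 hw₀) (fun _ => hw) fun i => ?_
  fin_cases i; rfl

theorem sq_norm_le_of_succMin_two (hΛ : Λ.FG) (h₁ : ‖b₁‖ ^ 2 = succMin Λ 1)
    (h₂ : ‖b₂‖ ^ 2 = succMin Λ 2) (hb₁ : b₁ ∈ Λ) (hw : w ∈ Λ)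
    (hli : LinearIndependent ℝ ![b₁, w]) : ‖b₂‖ ^ 2 ≤ ‖w‖ ^ 2 := by
  rw [h₂]
  refine succMin_le hΛ two_pos hli (fun i => by fin_cases i <;> assumption) fun i => ?_
  fin_cases i
  · exact sq_norm_le_of_succMin_one hΛ h₁ hw (hli.ne_zero 1)
  · rfl

theorem sq_norm_le_of_succMin_three (hΛ : Λ.FG) (h₁ : ‖b₁‖ ^ 2 = succMin Λ 1)
    (h₂ : ‖b₂‖ ^ 2 = succMin Λ 2) (h₃ : ‖b₃‖ ^ 2 = succMin Λ 3) (hb₁ : b₁ ∈ Λ) (hb₂ : b₂ ∈ Λ)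
    (hw : w ∈ Λ) (hli : LinearIndependent ℝ ![b₁, b₂, w]) : ‖b₃‖ ^ 2 ≤ ‖w‖ ^ 2 := by
  have hli₁ : LinearIndependent ℝ ![b₁, w] := by
    convert hli.comp ![0, 2] (by decide) using 1
    ext i; fin_cases i <;> rfl
  rw [h₃]
  refine succMin_le hΛ three_pos hli (fun i => by fin_cases i <;> assumption) fun i => ?_
  fin_cases i
  · exact sq_norm_le_of_succMin_one hΛ h₁ hw (hli.ne_zero 2)
  · exact sq_norm_le_of_succMin_two hΛ h₁ h₂ hb₁ hw hli₁
  · rfl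

theorem two_mul_abs_inner_le_of_succMin_two (hΛ : Λ.FG) (h₁ : ‖b₁‖ ^ 2 = succMin Λ 1)
    (h₂ : ‖b₂‖ ^ 2 = succMin Λ 2) (hb₁ : b₁ ∈ Λ) (hb₂ : b₂ ∈ Λ)
    (hli : LinearIndependent ℝ ![b₁, b₂]) : 2 * |⟪b₁, b₂⟫| ≤ ‖b₁‖ ^ 2 := by
  refine two_mul_abs_inner_le_of_forall_int fun c => sq_norm_le_of_succMin_two hΛ h₁ h₂ hb₁ ?_ ?_
  · exact Λ.add_mem (by rw [Int.cast_smul_eq_zsmul]; exact Λ.smul_mem c hb₁) hb₂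
  · exact (LinearIndependent.pair_add_smul_right_iff _).2 hli

theorem two_mul_abs_inner_le_of_succMin_three (hΛ : Λ.FG) (h₁ : ‖b₁‖ ^ 2 = succMin Λ 1)
    (h₂ : ‖b₂‖ ^ 2 = succMin Λ 2) (h₃ : ‖b₃‖ ^ 2 = succMin Λ 3) (hb₁ : b₁ ∈ Λ) (hb₂ : b₂ ∈ Λ)
    (hb₃ : b₃ ∈ Λ) (hli : LinearIndependent ℝ ![b₁, b₂, b₃]) {u : V} (hu : u ∈ Λ)
    (hu' : u ∈ Submodule.span ℝ {b₁, b₂}) : 2 * |⟪u, b₃⟫| ≤ ‖u‖ ^ 2 := by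
  refine two_mul_abs_inner_le_of_forall_int fun c =>
    sq_norm_le_of_succMin_three hΛ h₁ h₂ h₃ hb₁ hb₂ ?_ ?_
  · exact Λ.add_mem (by rw [Int.cast_smul_eq_zsmul]; exact Λ.smul_mem c hu) hb₃
  · exact (LinearIndependent.triple_add_iff_of_mem_span (Submodule.smul_mem _ _ hu')).2 hli

end InnerProductSpace

theorem Int.exists_sign_mul_eq_abs (m : ℤ) : ∃ ε : ℤ, (ε = 1 ∨ ε = -1) ∧ ε * m = |m| := by
  rcases abs_choice m with h | h
  · exact ⟨1, .inl rfl, by rw [h, one_mul]⟩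
  · exact ⟨-1, .inr rfl, by rw [h, neg_one_mul]⟩

theorem stmt_4_general {V : Type*} [NormedAddCommGroup V] [InnerProductSpace ℝ V]
    (β₁ β₂ β₃ : V) (hind : LinearIndependent ℝ ![β₁, β₂, β₃])
    (hint : ∀ u ∈ Submodule.span ℤ ({β₁, β₂, β₃} : Set V),
      ∀ v ∈ Submodule.span ℤ ({β₁, β₂, β₃} : Set V), ∃ n : ℤ, ⟪u, v⟫ = (n : ℝ))
    (h₁ : ‖β₁‖ ^ 2 = succMin (Submodule.span ℤ ({β₁, β₂, β₃} : Set V)) 1)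
    (h₂ : ‖β₂‖ ^ 2 = succMin (Submodule.span ℤ ({β₁, β₂, β₃} : Set V)) 2)
    (h₃ : ‖β₃‖ ^ 2 = succMin (Submodule.span ℤ ({β₁, β₂, β₃} : Set V)) 3) :
    ∃ ε₂ ε₃ : ℝ, (ε₂ = 1 ∨ ε₂ = -1) ∧ (ε₃ = 1 ∨ ε₃ = -1) ∧
      ∃ x y z : ℤ,
        ⟪β₁, ε₂ • β₂⟫ = (x : ℝ) ∧ ⟪β₁, ε₃ • β₃⟫ = (y : ℝ) ∧ ⟪ε₂ • β₂, ε₃ • β₃⟫ = (z : ℝ) ∧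
        0 ≤ (x : ℝ) ∧ 2 * (x : ℝ) ≤ ‖β₁‖ ^ 2 ∧
        0 ≤ (y : ℝ) ∧ 2 * (y : ℝ) ≤ ‖β₁‖ ^ 2 ∧
        2 * |(z : ℝ)| ≤ ‖β₂‖ ^ 2 := by
  set Λ := Submodule.span ℤ ({β₁, β₂, β₃} : Set V)
  have hΛ : Λ.FG := Submodule.fg_span (Set.toFinite _)
  have hβ₁ : β₁ ∈ Λ := Submodule.subset_span (by simp)
  have hβ₂ : β₂ ∈ Λ := Submodule.subset_span (by simp)
  have hβ₃ : β₃ ∈ Λ := Submodule.subset_span (by simp)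
  have hli₁₂ : LinearIndependent ℝ ![β₁, β₂] := by
    convert hind.comp ![0, 1] (by decide) using 1
    ext i; fin_cases i <;> rfl
  have key₁₂ := two_mul_abs_inner_le_of_succMin_two hΛ h₁ h₂ hβ₁ hβ₂ hli₁₂
  have key₁₃ := two_mul_abs_inner_le_of_succMin_three hΛ h₁ h₂ h₃ hβ₁ hβ₂ hβ₃ hind hβ₁
    (Submodule.subset_span (by simp))
  have key₂₃ := two_mul_abs_inner_le_of_succMin_three hΛ h₁ h₂ h₃ hβ₁ hβ₂ hβ₃ hind hβ₂
    (Submodule.subset_span (by simp))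
  obtain ⟨m₁₂, hm₁₂⟩ := hint β₁ hβ₁ β₂ hβ₂
  obtain ⟨m₁₃, hm₁₃⟩ := hint β₁ hβ₁ β₃ hβ₃
  obtain ⟨m₂₃, hm₂₃⟩ := hint β₂ hβ₂ β₃ hβ₃
  obtain ⟨ε₂, hε₂, hε₂m⟩ := Int.exists_sign_mul_eq_abs m₁₂
  obtain ⟨ε₃, hε₃, hε₃m⟩ := Int.exists_sign_mul_eq_abs m₁₃
  refine ⟨ε₂, ε₃, by rcases hε₂ with rfl | rfl <;> simp, by rcases hε₃ with rfl | rfl <;> simp,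
    |m₁₂|, |m₁₃|, ε₂ * ε₃ * m₂₃, ?_, ?_, ?_, by positivity, ?_, by positivity, ?_, ?_⟩
  · rw [real_inner_smul_right, hm₁₂]; exact_mod_cast hε₂m
  · rw [real_inner_smul_right, hm₁₃]; exact_mod_cast hε₃m
  · rw [real_inner_smul_left, real_inner_smul_right, hm₂₃]; push_cast; ring
  · rwa [Int.cast_abs, ← hm₁₂]
  · rwa [Int.cast_abs, ← hm₁₃]
  · rcases hε₂ with rfl | rfl <;> rcases hε₃ with rfl | rfl <;> simpa [← hm₂₃] using key₂₃

/-- If `(β₁, β₂, β₃)` is a successive minimal basis of the lattice `Λ` it spans (on which the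
inner product is integer-valued), then after replacing `β₂, β₃` by `±β₂, ±β₃` the Gram matrix
has the normalized form `[[D₁, x, y], [x, D₂, z], [y, z, D₃]]` with `x, y, z ∈ ℤ`,
`0 ≤ x ≤ D₁/2`, `0 ≤ y ≤ D₁/2` and `|z| ≤ D₂/2`. -/
theorem stmt_4 {V : Type*} [NormedAddCommGroup V] [InnerProductSpace ℝ V]
    (β₁ β₂ β₃ : V) (hind : LinearIndependent ℝ ![β₁, β₂, β₃])
    (hint : ∀ u ∈ Submodule.span ℤ ({β₁, β₂, β₃} : Set V),
      ∀ v ∈ Submodule.span ℤ ({β₁, β₂, β₃} : Set V), ∃ n : ℤ, ⟪u, v⟫ = (n : ℝ))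
    (h₁ : ‖β₁‖ ^ 2 = succMin (Submodule.span ℤ ({β₁, β₂, β₃} : Set V)) 1)
    (h₂ : ‖β₂‖ ^ 2 = succMin (Submodule.span ℤ ({β₁, β₂, β₃} : Set V)) 2)
    (h₃ : ‖β₃‖ ^ 2 = succMin (Submodule.span ℤ ({β₁, β₂, β₃} : Set V)) 3)
    (h₁₂ : ‖β₁‖ ^ 2 ≤ ‖β₂‖ ^ 2) (h₂₃ : ‖β₂‖ ^ 2 ≤ ‖β₃‖ ^ 2) :
    ∃ ε₂ ε₃ : ℝ, (ε₂ = 1 ∨ ε₂ = -1) ∧ (ε₃ = 1 ∨ ε₃ = -1) ∧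
      ∃ x y z : ℤ,
        ⟪β₁, ε₂ • β₂⟫ = (x : ℝ) ∧ ⟪β₁, ε₃ • β₃⟫ = (y : ℝ) ∧ ⟪ε₂ • β₂, ε₃ • β₃⟫ = (z : ℝ) ∧
        0 ≤ (x : ℝ) ∧ 2 * (x : ℝ) ≤ ‖β₁‖ ^ 2 ∧
        0 ≤ (y : ℝ) ∧ 2 * (y : ℝ) ≤ ‖β₁‖ ^ 2 ∧
        2 * |(z : ℝ)| ≤ ‖β₂‖ ^ 2 :=
  stmt_4_general β₁ β₂ β₃ hind hint h₁ h₂ h₃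
end

section
/- Let B = ℍ[ℚ, c₁, c₂] be a quaternion algebra over ℚ, let O be a subring of B such that for every x ∈ O the reduced trace trd(x) = x + x̄ is an integer, and let p be a prime. Suppose α₁, α₂ ∈ O, set β₁ = 2α₁ − trd(α₁) and β₂ = 2α₂ − trd(α₂), and assume that nrd(β₁)·nrd(β₂) − (1/4)·trd(β₁·β̄₂)² = 4p. Then the element α = (1/2)·β₁·β̄₂ − (1/4)·trd(β₁·β̄₂) belongs to O, and satisfies trd(α) = 0 and nrd(α) = p. -/
open scoped Quaternion

/-!
Since `βᵢ = αᵢ - ᾱᵢ` is pure, `α` is half the pure part of `β₁β̄₂ = -β₁β₂`, and for pure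
quaternions `u, v` twice the pure part of `uv` is `uv - vu`. Hence `α = α₂α₁ - α₁α₂`, which lies
in `O` and is pure. Its norm is `(nrd(β₁β̄₂) - re(β₁β̄₂)²) / 4 = (nrd β₁ nrd β₂ - re(β₁β̄₂)²) / 4`,
which the hypothesis makes equal to `p`.
-/

namespace QuaternionAlgebra

variable {R : Type*} [CommRing R] {c₁ c₂ : R}

theorem im_sub_star_mul_star_sub_star (a b : ℍ[R, c₁, c₂]) :
    ((a - star a) * star (b - star b)).im = 2 * (b * a - a * b) := by
  ext <;> simp [re_mul, imI_mul, imJ_mul, imK_mul] <;> ring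

theorem im_mul_star_im (x : ℍ[R, c₁, c₂]) :
    x.im * star x.im = (((x * star x).re - x.re ^ 2 : R) : ℍ[R, c₁, c₂]) := by
  ext <;> simp [re_mul, imI_mul, imJ_mul, imK_mul, sq] <;> ring

theorem re_mul_mul_star_mul {c₃ : R} (a b : ℍ[R, c₁, c₂, c₃]) :
    (a * b * star (a * b)).re = (a * star a).re * (b * star b).re := by
  rw [star_mul, mul_assoc, ← mul_assoc b, mul_star_eq_coe b, ← mul_assoc, mul_coe_eq_smul,
    smul_mul_assoc, re_smul, smul_eq_mul, re_coe, mul_comm]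

end QuaternionAlgebra

open QuaternionAlgebra in
theorem stmt_5_general (c₁ c₂ : ℚ) (O : Subring ℍ[ℚ, c₁, c₂])
    (p : ℕ) (α₁ α₂ : ℍ[ℚ, c₁, c₂]) (h₁ : α₁ ∈ O) (h₂ : α₂ ∈ O)
    (β₁ β₂ : ℍ[ℚ, c₁, c₂])
    (hβ₁ : β₁ = 2 * α₁ - (α₁ + star α₁)) (hβ₂ : β₂ = 2 * α₂ - (α₂ + star α₂))
    (hdet : (β₁ * star β₁).re * (β₂ * star β₂).re
        - (1 / 4) * (2 * (β₁ * star β₂).re) ^ 2 = 4 * p) :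
    let α : ℍ[ℚ, c₁, c₂] := ((1 : ℚ) / 2) • (β₁ * star β₂)
        - (((1 : ℚ) / 4 * (2 * (β₁ * star β₂).re) : ℚ) : ℍ[ℚ, c₁, c₂])
    α ∈ O ∧ α + star α = 0 ∧ α * star α = ((p : ℚ) : ℍ[ℚ, c₁, c₂]) := by
  intro α
  have hα : α = ((1 : ℚ) / 2) • (β₁ * star β₂).im := by
    simp only [α, ← sub_re_self, smul_sub, smul_coe]
    ring_nf
  have hcomm : α = α₂ * α₁ - α₁ * α₂ := by
    have hβ₁' : β₁ = α₁ - star α₁ := by rw [hβ₁, two_mul]; abel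
    have hβ₂' : β₂ = α₂ - star α₂ := by rw [hβ₂, two_mul]; abel
    rw [hα, hβ₁', hβ₂', im_sub_star_mul_star_sub_star, two_mul, smul_add, ← add_smul]
    norm_num
  refine ⟨hcomm ▸ O.sub_mem (O.mul_mem h₂ h₁) (O.mul_mem h₁ h₂), ?_, ?_⟩
  · rw [hα, star_smul', star_im]
    simp
  · have hnrd : (β₁ * star β₂ * star (β₁ * star β₂)).re - (β₁ * star β₂).re ^ 2 = 4 * p := by
      rw [re_mul_mul_star_mul, star_star, star_comm_self']
      linear_combination hdet
    rw [hα, star_smul', smul_mul_smul, im_mul_star_im, hnrd, smul_coe]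
    ring_nf

/-- Let `O` be a subring of a quaternion algebra over `ℚ` all of whose elements have integral
reduced trace, let `p` be prime, and for `α₁, α₂ ∈ O` set `βᵢ = 2αᵢ - trd(αᵢ)`.  If
`nrd(β₁)·nrd(β₂) - (1/4)·trd(β₁·β̄₂)² = 4p`, then
`α = (1/2)·β₁·β̄₂ - (1/4)·trd(β₁·β̄₂)` lies in `O`, has reduced trace `0`, and reduced
norm `p`. -/
theorem stmt_5 (c₁ c₂ : ℚ) (O : Subring ℍ[ℚ, c₁, c₂])
    (hO : ∀ x ∈ O, ∃ n : ℤ, x + star x = (n : ℍ[ℚ, c₁, c₂]))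
    (p : ℕ) (hp : p.Prime) (α₁ α₂ : ℍ[ℚ, c₁, c₂]) (h₁ : α₁ ∈ O) (h₂ : α₂ ∈ O)
    (β₁ β₂ : ℍ[ℚ, c₁, c₂])
    (hβ₁ : β₁ = 2 * α₁ - (α₁ + star α₁)) (hβ₂ : β₂ = 2 * α₂ - (α₂ + star α₂))
    (hdet : (β₁ * star β₁).re * (β₂ * star β₂).re
        - (1 / 4) * (2 * (β₁ * star β₂).re) ^ 2 = 4 * p) :
    let α : ℍ[ℚ, c₁, c₂] := ((1 : ℚ) / 2) • (β₁ * star β₂)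
        - (((1 : ℚ) / 4 * (2 * (β₁ * star β₂).re) : ℚ) : ℍ[ℚ, c₁, c₂])
    α ∈ O ∧ α + star α = 0 ∧ α * star α = ((p : ℚ) : ℍ[ℚ, c₁, c₂]) :=
  stmt_5_general c₁ c₂ O p α₁ α₂ h₁ h₂ β₁ β₂ hβ₁ hβ₂ hdet
end

section
/- Let V be a real inner product space, let b₁, b₂, b₃ ∈ V be ℝ-linearly independent, and let (b₁, b₂*, b₃*) denote the Gram–Schmidt orthogonalization of (b₁, b₂, b₃). Then there exist integers m and n such that the vector b₃' = b₃ − m·b₂ − n·b₁ satisfies ‖b₃'‖² ≤ ‖b₃*‖² + (1/4)·(‖b₁‖² + ‖b₂*‖²); moreover the ℤ-span of {b₁, b₂, b₃'} equals the ℤ-span of {b₁, b₂, b₃}. -/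
/-!
Expand `b₂ = b₂* + μ₂₁ b₁* + μ₂₀ b₀` and `b₁ = b₁* + μ₁₀ b₀` in the orthogonal Gram–Schmidt
basis, with `μᵢⱼ = gramSchmidtCoeff b i j`. Subtracting `m b₁ + n b₀` leaves `b₂* + (μ₂₁ - m) b₁* + (μ₂₀ - m μ₁₀ - n) b₀`, whose
squared norm is a weighted sum of squares by Pythagoras. Rounding first `μ₂₁` and then
`μ₂₀ - m μ₁₀` to the nearest integer makes both coefficients at most `1/2` in absolute value.
The `ℤ`-span is unchanged because `m b₁ + n b₀` already lies in the span of `b₀, b₁`.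
-/

instance : WellFoundedLT (Fin 3) := inferInstance

open scoped RealInnerProductSpace
open InnerProductSpace

theorem sq_sub_round_le {α : Type*} [Field α] [LinearOrder α] [IsStrictOrderedRing α]
    [FloorRing α] (x : α) : (x - round x) ^ 2 ≤ 1 / 4 := by
  calc (x - round x) ^ 2 = |x - round x| ^ 2 := (sq_abs _).symm
    _ ≤ (1 / 2) ^ 2 := by gcongr; exact abs_sub_round x
    _ = 1 / 4 := by norm_num

namespace Submodule

variable {R M : Type*} [Ring R] [AddCommGroup M] [Module R M]

theorem span_insert_add_of_mem {s : Set M} {x y : M} (hy : y ∈ span R s) :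
    span R (insert (x + y) s) = span R (insert x s) := by
  have key : ∀ {x y : M}, y ∈ span R s → span R (insert (x + y) s) ≤ span R (insert x s) := by
    intro x y hy
    rw [span_insert, span_insert, sup_le_iff, span_singleton_le_iff_mem]
    exact ⟨add_mem (mem_sup_left (mem_span_singleton_self x)) (mem_sup_right hy), le_sup_right⟩
  refine le_antisymm (key hy) ?_
  simpa using key (x := x + y) (neg_mem hy)

theorem span_triple_sub_smul_sub_smul (a b c : M) (m n : R) :
    span R {a, b, c - m • b - n • a} = span R {a, b, c} := by
  have hrot : ∀ z : M, ({a, b, z} : Set M) = insert z {a, b} := fun z => by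
    ext; simp only [Set.mem_insert_iff, Set.mem_singleton_iff]; tauto
  have hmem : -(m • b + n • a) ∈ span R {a, b} :=
    neg_mem (add_mem (smul_mem _ _ (subset_span (by simp))) (smul_mem _ _ (subset_span (by simp))))
  rw [hrot, hrot, show c - m • b - n • a = c + -(m • b + n • a) by abel,
    span_insert_add_of_mem hmem]

end Submodule

theorem norm_add_add_sq_of_inner_eq_zero {V : Type*} [NormedAddCommGroup V]
    [InnerProductSpace ℝ V] {u v w : V} (huv : ⟪u, v⟫ = 0) (huw : ⟪u, w⟫ = 0) (hvw : ⟪v, w⟫ = 0) :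
    ‖u + v + w‖ ^ 2 = ‖u‖ ^ 2 + ‖v‖ ^ 2 + ‖w‖ ^ 2 := by
  rw [norm_add_sq_real, norm_add_sq_real, inner_add_left, huv, huw, hvw]
  ring

section GramSchmidt

variable {V : Type*} [NormedAddCommGroup V] [InnerProductSpace ℝ V] (b : Fin 3 → V)

noncomputable def gramSchmidtCoeff (i j : Fin 3) : ℝ :=
  ⟪gramSchmidt ℝ b j, b i⟫ / ‖gramSchmidt ℝ b j‖ ^ 2

theorem eq_gramSchmidt_one_add :
    b 1 = gramSchmidt ℝ b 1 + gramSchmidtCoeff b 1 0 • gramSchmidt ℝ b 0 := by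
  have h := gramSchmidt_def'' ℝ b 1
  rwa [show Finset.Iio (1 : Fin 3) = {0} by decide, Finset.sum_singleton] at h

theorem eq_gramSchmidt_two_add :
    b 2 = gramSchmidt ℝ b 2 + gramSchmidtCoeff b 2 1 • gramSchmidt ℝ b 1 +
      gramSchmidtCoeff b 2 0 • gramSchmidt ℝ b 0 := by
  have h := gramSchmidt_def'' ℝ b 2
  rw [show Finset.Iio (2 : Fin 3) = {0, 1} by decide, Finset.sum_pair (by decide)] at h
  rw [h, add_assoc, add_comm (_ • gramSchmidt ℝ b 0)]
  rfl

theorem sub_zsmul_sub_zsmul_eq_gramSchmidt (m n : ℤ) :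
    b 2 - m • b 1 - n • b 0 = gramSchmidt ℝ b 2 +
      (gramSchmidtCoeff b 2 1 - m) • gramSchmidt ℝ b 1 +
      (gramSchmidtCoeff b 2 0 - m * gramSchmidtCoeff b 1 0 - n) • gramSchmidt ℝ b 0 := by
  rw [← Int.cast_smul_eq_zsmul ℝ m, ← Int.cast_smul_eq_zsmul ℝ n]
  have h0 : gramSchmidt ℝ b 0 = b 0 := gramSchmidt_bot ℝ b
  rw [eq_gramSchmidt_two_add b, eq_gramSchmidt_one_add b, h0]
  module

theorem norm_sub_zsmul_sub_zsmul_sq (m n : ℤ) :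
    ‖b 2 - m • b 1 - n • b 0‖ ^ 2 = ‖gramSchmidt ℝ b 2‖ ^ 2 +
      (gramSchmidtCoeff b 2 1 - m) ^ 2 * ‖gramSchmidt ℝ b 1‖ ^ 2 +
      (gramSchmidtCoeff b 2 0 - m * gramSchmidtCoeff b 1 0 - n) ^ 2 * ‖b 0‖ ^ 2 := by
  have horth : ∀ i j : Fin 3, i ≠ j → ⟪gramSchmidt ℝ b i, gramSchmidt ℝ b j⟫ = 0 :=
    fun i j hij => gramSchmidt_orthogonal ℝ b hij
  have h0 : gramSchmidt ℝ b 0 = b 0 := gramSchmidt_bot ℝ b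
  rw [sub_zsmul_sub_zsmul_eq_gramSchmidt, norm_add_add_sq_of_inner_eq_zero, norm_smul, norm_smul,
    mul_pow, mul_pow, Real.norm_eq_abs, Real.norm_eq_abs, sq_abs, sq_abs, h0]
  all_goals simp only [inner_smul_left, inner_smul_right, horth 2 1 (by decide),
    horth 2 0 (by decide), horth 1 0 (by decide), mul_zero]

end GramSchmidt

theorem stmt_7_general {V : Type*} [NormedAddCommGroup V] [InnerProductSpace ℝ V]
    (b : Fin 3 → V) :
    ∃ m n : ℤ,
      ‖b 2 - m • b 1 - n • b 0‖ ^ 2 ≤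
        ‖InnerProductSpace.gramSchmidt ℝ (ι := Fin 3) b 2‖ ^ 2 +
          1 / 4 * (‖b 0‖ ^ 2 + ‖InnerProductSpace.gramSchmidt ℝ (ι := Fin 3) b 1‖ ^ 2) ∧
      Submodule.span ℤ ({b 0, b 1, b 2 - m • b 1 - n • b 0} : Set V) =
        Submodule.span ℤ ({b 0, b 1, b 2} : Set V) := by
  set m := round (gramSchmidtCoeff b 2 1)
  set n := round (gramSchmidtCoeff b 2 0 - m * gramSchmidtCoeff b 1 0)
  refine ⟨m, n, ?_, Submodule.span_triple_sub_smul_sub_smul _ _ _ _ _⟩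
  have hm := sq_sub_round_le (gramSchmidtCoeff b 2 1)
  have hn := sq_sub_round_le (gramSchmidtCoeff b 2 0 - m * gramSchmidtCoeff b 1 0)
  rw [norm_sub_zsmul_sub_zsmul_sq]
  linarith [mul_le_mul_of_nonneg_right hm (sq_nonneg ‖gramSchmidt ℝ b 1‖),
    mul_le_mul_of_nonneg_right hn (sq_nonneg ‖b 0‖)]

/-- Size-reduction of the third basis vector: for linearly independent `b₀, b₁, b₂` in a real
inner product space with Gram–Schmidt orthogonalization `(b₀, b₁*, b₂*)`, there are integers
`m, n` such that `b₂' = b₂ - m·b₁ - n·b₀` satisfies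
`‖b₂'‖² ≤ ‖b₂*‖² + (1/4)·(‖b₀‖² + ‖b₁*‖²)`, and `{b₀, b₁, b₂'}` spans the same `ℤ`-lattice
as `{b₀, b₁, b₂}`. -/
theorem stmt_7 {V : Type*} [NormedAddCommGroup V] [InnerProductSpace ℝ V]
    (b : Fin 3 → V) (hind : LinearIndependent ℝ b) :
    ∃ m n : ℤ,
      ‖b 2 - m • b 1 - n • b 0‖ ^ 2 ≤
        ‖InnerProductSpace.gramSchmidt ℝ (ι := Fin 3) b 2‖ ^ 2 +
          1 / 4 * (‖b 0‖ ^ 2 + ‖InnerProductSpace.gramSchmidt ℝ (ι := Fin 3) b 1‖ ^ 2) ∧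
      Submodule.span ℤ ({b 0, b 1, b 2 - m • b 1 - n • b 0} : Set V) =
        Submodule.span ℤ ({b 0, b 1, b 2} : Set V) :=
  stmt_7_general b
end

section
/- There do not exist a prime p ≥ 13 and nonnegative integers D, x satisfying 2x ≤ D, 3·D² ≤ 16·p, and D² − x² = 4p. (This is the arithmetic core of the proof that the first two successive minima of the Gross lattice are distinct when j(E) ∈ 𝔽_p: taking D = D₁ = D₂ yields a contradiction.) -/
/-- There is no prime `p ≥ 13` together with nonnegative integers `D, x` satisfying
`2x ≤ D`, `3D² ≤ 16p` (the Kaneko bound) and `D² - x² = 4p`. -/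
theorem stmt_8 :
    ¬ ∃ (p : ℕ) (D x : ℤ), p.Prime ∧ 13 ≤ p ∧ 0 ≤ D ∧ 0 ≤ x ∧
      2 * x ≤ D ∧ 3 * D ^ 2 ≤ 16 * (p : ℤ) ∧ D ^ 2 - x ^ 2 = 4 * (p : ℤ) := by
  rintro ⟨p, D, x, hp, hp13, hD, hx, hxD, hK, heq⟩
  have hp13' : (13 : ℤ) ≤ (p : ℤ) := by exact_mod_cast hp13
  have hDx : x < D := by nlinarith
  have hev : Even ((D - x) * (D + x)) := by
    rw [show (D - x) * (D + x) = D ^ 2 - x ^ 2 by ring, heq]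
    exact ⟨2 * (p : ℤ), by ring⟩
  have hpar : (2 : ℤ) ∣ (D - x) := by
    rcases Int.even_mul.mp hev with h | h
    · exact h.two_dvd
    · have h2 : Even (D + x - 2 * x) := h.sub (even_two_mul x)
      have h3 : D + x - 2 * x = D - x := by ring
      rw [h3] at h2
      exact h2.two_dvd
  obtain ⟨a, ha⟩ := hpar
  have hDa : D = 2 * a + x := by omega
  have hab : (p : ℤ) = a * (a + x) := by nlinarith
  have ha0 : 0 < a := by omega
  have hpZ : Prime ((p : ℕ) : ℤ) := Nat.prime_iff_prime_int.mp hp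
  rcases hpZ.irreducible.isUnit_or_isUnit hab with h | h <;>
    rw [Int.isUnit_iff] at h <;> rcases h with h1 | h1
  · -- a = 1 : then a + x = p, so x = p - 1 and D = p + 1; 2x ≤ D forces p ≤ 3
    have hbp : 1 + x = (p : ℤ) := by
      have := hab
      rw [h1] at this
      linarith
    omega
  · omega
  · -- a + x = 1 : then a = 1, x = 0, p = 1
    have hpx : (p : ℤ) = a := by
      have := hab
      rw [h1] at this
      linarith
    omega
  · omega
end

section
/- There do not exist a prime p ≥ 11 and integers D, z, n with n ≥ 1, 2·|z| ≤ D, p ≤ D, 28·D ≤ 32·p + 49, and D² − z² = 4·n·p. (This is the arithmetic core of the proof that the last two successive minima of the Gross lattice are distinct when j(E) ∈ 𝔽_p \ {0}: taking D = D₂ = D₃ yields a contradiction.) -/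
/-- There is no prime `p ≥ 11` together with integers `D, z, n`, `n ≥ 1`, satisfying
`2|z| ≤ D`, `p ≤ D`, `28D ≤ 32p + 49` (i.e. `D ≤ (8/7)p + 7/4`) and `D² - z² = 4np`. -/
theorem stmt_9 :
    ¬ ∃ (p : ℕ) (D z n : ℤ), p.Prime ∧ 11 ≤ p ∧ 1 ≤ n ∧ 2 * |z| ≤ D ∧
      (p : ℤ) ≤ D ∧ 28 * D ≤ 32 * (p : ℤ) + 49 ∧ D ^ 2 - z ^ 2 = 4 * n * (p : ℤ) := by
  rintro ⟨p, D, z, n, hp, hp11, hn, hz, hpD, hD, heq⟩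
  have hp11' : (11 : ℤ) ≤ (p : ℤ) := by exact_mod_cast hp11
  have hzle : z ≤ |z| := le_abs_self z
  have hzge : -|z| ≤ z := neg_abs_le z
  have hpZ : Prime (p : ℤ) := Int.prime_iff_natAbs_prime.mpr (by simpa using hp)
  have hodd : Odd (p : ℤ) := by
    have : Odd p := hp.odd_of_ne_two (by omega)
    exact_mod_cast this
  obtain ⟨m, hm⟩ := hodd
  have hab : (D - z) * (D + z) = (p : ℤ) * (4 * n) := by linear_combination heq
  have hdvd : (p : ℤ) ∣ (D - z) * (D + z) := ⟨4 * n, hab⟩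
  have hane : (p : ℤ) ≠ 0 := by positivity
  rcases hpZ.dvd_mul.mp hdvd with h | h
  · -- p ∣ D - z, and p/2 ≤ D - z < 2p, so D - z = p
    have h1 : (p : ℤ) ≤ D - z := Int.le_of_dvd (by linarith) h
    have h2 : D - z < 2 * p := by linarith
    obtain ⟨k, hk⟩ := h
    have hk1 : k = 1 := by
      rcases lt_trichotomy k 1 with hlt | he | hgt
      · nlinarith
      · exact he
      · nlinarith
    rw [hk1, mul_one] at hk
    have hb : D + z = 4 * n := by
      have := hab
      rw [hk] at this
      exact mul_left_cancel₀ hane this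
    omega
  · have h1 : (p : ℤ) ≤ D + z := Int.le_of_dvd (by linarith) h
    have h2 : D + z < 2 * p := by linarith
    obtain ⟨k, hk⟩ := h
    have hk1 : k = 1 := by
      rcases lt_trichotomy k 1 with hlt | he | hgt
      · nlinarith
      · exact he
      · nlinarith
    rw [hk1, mul_one] at hk
    have hb : D - z = 4 * n := by
      have h3 : (p : ℤ) * (D - z) = (p : ℤ) * (4 * n) := by
        linear_combination hab - (D - z) * hk
      exact mul_left_cancel₀ hane h3
    omega
end

section
/- Let p ≥ 7 be a prime and let D₁, D₃ be positive integers with 3·D₁² ≤ 16·p. Suppose y and y' are integers with 0 ≤ y ≤ D₁/2 and 0 ≤ y' ≤ D₁/2 such that 4p divides D₁·D₃ − y² and 4p divides D₁·D₃ − y'². Then y = y'. (This is the uniqueness of the entry y in the Gram matrix of a normalized successive minimal basis, given the successive minima D₁ and D₃.) -/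
/-- Uniqueness of the Gram-matrix entry `y`: if `p ≥ 7` is prime, `D₁, D₃` are positive with
`3D₁² ≤ 16p`, and `y, y'` are integers in `[0, D₁/2]` with `4p ∣ D₁D₃ - y²` and
`4p ∣ D₁D₃ - y'²`, then `y = y'`. -/
theorem stmt_10 (p : ℕ) (hp : p.Prime) (hp7 : 7 ≤ p) (D₁ D₃ : ℤ)
    (hD₁ : 0 < D₁) (hD₃ : 0 < D₃) (hK : 3 * D₁ ^ 2 ≤ 16 * (p : ℤ))
    (y y' : ℤ) (hy0 : 0 ≤ y) (hy : 2 * y ≤ D₁) (hy'0 : 0 ≤ y') (hy' : 2 * y' ≤ D₁)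
    (hd : (4 * (p : ℤ)) ∣ D₁ * D₃ - y ^ 2) (hd' : (4 * (p : ℤ)) ∣ D₁ * D₃ - y' ^ 2) :
    y = y' := by
  have hp' : (7 : ℤ) ≤ (p : ℤ) := by exact_mod_cast hp7
  have hdvd : (4 * (p : ℤ)) ∣ y ^ 2 - y' ^ 2 := by
    have := dvd_sub hd' hd
    have h : (D₁ * D₃ - y' ^ 2) - (D₁ * D₃ - y ^ 2) = y ^ 2 - y' ^ 2 := by ring
    rwa [h] at this
  have habs : |y ^ 2 - y' ^ 2| < 4 * (p : ℤ) := by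
    rw [abs_lt]
    constructor <;> nlinarith [sq_nonneg y, sq_nonneg y', sq_nonneg (y - y'), sq_nonneg (y + y')]
  have h0 : y ^ 2 - y' ^ 2 = 0 := Int.eq_zero_of_abs_lt_dvd hdvd habs
  nlinarith [sq_nonneg (y - y')]
end

section
/- Let p ≥ 7 be a prime and let D₁, D₂, D₃, x, y be integers satisfying: 7 ≤ D₁ ≤ D₂, 21·D₂ ≤ 16·p, p ≤ D₃ < 2·p, 0 ≤ 2x ≤ D₁ with D₁·D₂ − x² = 4p, and 0 ≤ 2y ≤ D₁ with 4p dividing D₁·D₃ − y². Suppose z and z' are integers with 2·|z| ≤ D₂ and 2·|z'| ≤ D₂ such that 4p divides D₂·D₃ − z² and 4p divides D₂·D₃ − z'², and such that both z and z' satisfy the determinant equation D₁·D₂·D₃ + 2·x·y·t − D₃·x² − D₂·y² − D₁·t² = 4·p² (with t = z and t = z' respectively). Then z = z'. (This is the uniqueness of the entry z in the Gram matrix of a normalized successive minimal basis when D₁ ≥ 7.) -/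
/-- Uniqueness of the Gram-matrix entry `z` when `D₁ ≥ 7`: under the constraints on
`p, D₁, D₂, D₃, x, y` coming from a normalized successive minimal basis, two integers `z, z'`
with `2|z|, 2|z'| ≤ D₂` satisfying the divisibility conditions and the determinant equation
must be equal. -/
theorem stmt_11 (p : ℕ) (hp : p.Prime) (hp7 : 7 ≤ p)
    (D₁ D₂ D₃ x y z z' : ℤ)
    (h7D₁ : 7 ≤ D₁) (hD₁₂ : D₁ ≤ D₂) (hD₂ : 21 * D₂ ≤ 16 * (p : ℤ))
    (hD₃l : (p : ℤ) ≤ D₃) (hD₃u : D₃ < 2 * (p : ℤ))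
    (hx0 : 0 ≤ 2 * x) (hx : 2 * x ≤ D₁) (hxeq : D₁ * D₂ - x ^ 2 = 4 * (p : ℤ))
    (hy0 : 0 ≤ 2 * y) (hy : 2 * y ≤ D₁) (hydvd : (4 * (p : ℤ)) ∣ D₁ * D₃ - y ^ 2)
    (hz : 2 * |z| ≤ D₂) (hz' : 2 * |z'| ≤ D₂)
    (hzdvd : (4 * (p : ℤ)) ∣ D₂ * D₃ - z ^ 2) (hz'dvd : (4 * (p : ℤ)) ∣ D₂ * D₃ - z' ^ 2)
    (hdet : D₁ * D₂ * D₃ + 2 * x * y * z - D₃ * x ^ 2 - D₂ * y ^ 2 - D₁ * z ^ 2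
      = 4 * (p : ℤ) ^ 2)
    (hdet' : D₁ * D₂ * D₃ + 2 * x * y * z' - D₃ * x ^ 2 - D₂ * y ^ 2 - D₁ * z' ^ 2
      = 4 * (p : ℤ) ^ 2) :
    z = z' := by
  have hP7 : (7:ℤ) ≤ (p:ℤ) := by exact_mod_cast hp7
  have hPpos : (0:ℤ) < (p:ℤ) := by linarith
  have hD₁pos : (0:ℤ) < D₁ := by linarith
  obtain ⟨k, hk⟩ := hydvd
  -- key square identities
  have hsq : (D₁ * z - x * y) ^ 2 = (2*(p:ℤ))^2 * (4*k - D₁) := by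
    linear_combination (D₁*D₃ - y^2) * hxeq + 4*(p:ℤ)*hk - D₁*hdet
  have hsq' : (D₁ * z' - x * y) ^ 2 = (2*(p:ℤ))^2 * (4*k - D₁) := by
    linear_combination (D₁*D₃ - y^2) * hxeq + 4*(p:ℤ)*hk - D₁*hdet'
  have h2P : (2*(p:ℤ)) ≠ 0 := by positivity
  have hdvd : (2*(p:ℤ)) ∣ (D₁ * z - x * y) := by
    have : (2*(p:ℤ))^2 ∣ (D₁ * z - x * y)^2 := ⟨4*k - D₁, hsq⟩
    exact (Int.pow_dvd_pow_iff two_ne_zero).mp this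
  have hdvd' : (2*(p:ℤ)) ∣ (D₁ * z' - x * y) := by
    have : (2*(p:ℤ))^2 ∣ (D₁ * z' - x * y)^2 := ⟨4*k - D₁, hsq'⟩
    exact (Int.pow_dvd_pow_iff two_ne_zero).mp this
  obtain ⟨n, hn⟩ := hdvd
  obtain ⟨n', hn'⟩ := hdvd'
  have hnsq : n^2 = 4*k - D₁ := by
    have h4 : ((2*(p:ℤ))^2) ≠ 0 := pow_ne_zero _ h2P
    apply mul_left_cancel₀ h4
    calc (2*(p:ℤ))^2 * n^2 = (2*(p:ℤ)*n)^2 := by ring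
    _ = (2*(p:ℤ))^2 * (4*k - D₁) := by rw [← hn]; exact hsq
  have hn'sq : n'^2 = 4*k - D₁ := by
    have h4 : ((2*(p:ℤ))^2) ≠ 0 := pow_ne_zero _ h2P
    apply mul_left_cancel₀ h4
    calc (2*(p:ℤ))^2 * n'^2 = (2*(p:ℤ)*n')^2 := by ring
    _ = (2*(p:ℤ))^2 * (4*k - D₁) := by rw [← hn']; exact hsq'
  have hee : (n - n') * (n + n') = 0 := by
    have : n^2 = n'^2 := by rw [hnsq, hn'sq]
    linear_combination this
  rcases mul_eq_zero.mp hee with h | h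
  · -- n = n', so D₁ z = D₁ z'
    have : D₁ * z = D₁ * z' := by
      have hnn : n = n' := by linarith
      have := hn
      rw [hnn, ← hn'] at this
      linarith
    exact mul_left_cancel₀ (ne_of_gt hD₁pos) this
  · -- n = -n' : D₁(z - z') = 4 p n
    have hkey : D₁ * (z - z') = 4*(p:ℤ)*n := by
      have : D₁ * z - x*y - (D₁*z' - x*y) = 2*(p:ℤ)*n - 2*(p:ℤ)*n' := by rw [hn, hn']
      have hnn : n' = -n := by linarith
      rw [hnn] at this
      linarith
    by_cases hn0 : n = 0
    · have : D₁ * (z - z') = 0 := by rw [hkey, hn0]; ring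
      have := mul_eq_zero.mp this
      rcases this with h1 | h1
      · exact absurd h1 (ne_of_gt hD₁pos)
      · linarith
    · exfalso
      -- bounds
      have hx2 : 3 * x^2 ≤ 4*(p:ℤ) := by nlinarith [sq_nonneg x]
      have hzz : |z - z'| ≤ D₂ := by
        have h1 := abs_sub (z) (z')
        calc |z - z'| ≤ |z| + |z'| := abs_sub _ _
        _ ≤ D₂ := by linarith
      have habs : D₁ * |z - z'| = 4*(p:ℤ) * |n| := by
        have h := congrArg (|·|) hkey
        simpa [abs_mul, abs_of_pos hD₁pos, abs_of_pos hPpos, mul_assoc] using h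
      have hn1 : |n| = 1 := by
        have h1 : 1 ≤ |n| := Int.one_le_abs (by exact_mod_cast hn0)
        by_contra hne
        have h2 : 2 ≤ |n| := by omega
        have hb : D₁ * |z - z'| ≤ D₁ * D₂ := by
          apply mul_le_mul_of_nonneg_left hzz (le_of_lt hD₁pos)
        have h3 : 4*(p:ℤ)*2 ≤ 4*(p:ℤ)*|n| :=
          mul_le_mul_of_nonneg_left h2 (by positivity)
        linarith
      -- D₁ ∣ 4p
      have hdvd4p : D₁ ∣ 4*(p:ℤ) := by
        refine ⟨(z - z') * n, ?_⟩
        have : n * n = 1 := by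
          have h1 : n^2 = 1 := by rw [← sq_abs n, hn1]; norm_num
          linear_combination h1
        linear_combination (-n)*hkey - 4*(p:ℤ)*this
      -- contradiction: 7 ≤ D₁ < p and D₁ ∣ 4p
      have hd : D₁.natAbs ∣ 4 * p := by
        have := Int.natAbs_dvd_natAbs.mpr hdvd4p
        simpa [Int.natAbs_mul] using this
      have hdlt : D₁.natAbs < p := by
        have : D₁ < (p:ℤ) := by linarith
        omega
      have hd7 : 7 ≤ D₁.natAbs := by omega
      have hcop : Nat.Coprime D₁.natAbs p := by
        have hnd : ¬ p ∣ D₁.natAbs := fun hpd => by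
          have := Nat.le_of_dvd (by omega) hpd
          omega
        exact Nat.coprime_comm.mp (hp.coprime_iff_not_dvd.mpr hnd)
      have : D₁.natAbs ∣ 4 := hcop.dvd_of_dvd_mul_right hd
      have := Nat.le_of_dvd (by norm_num) this
      omega
end

section
/- Let p be a prime with p ≡ 2 (mod 3), and work in the quaternion algebra B = ℍ[ℚ, −3, −p] with basis 1, i, j, k (i² = −3, j² = −p, k = ij). Let O be the ℤ-span of {1, (1+i)/2, (j−k)/2, (i−k)/3} in B, and let O^T = {2x − trd(x) : x ∈ O} be its Gross lattice. Set β₁ = i, β₂ = (i + 3j − k)/3, β₃ = (i + 2k)/3. Then: (a) O^T equals the ℤ-span of {β₁, β₂, β₃}; (b) with pairing (x, y) = (1/2)·trd(x·ȳ), the Gram matrix of (β₁, β₂, β₃) is [[3, 1, 1], [1, (4p+1)/3, −(2p−1)/3], [1, −(2p−1)/3, (4p+1)/3]]; and (c) this basis attains the successive minima of O^T, which are D₁ = 3 and D₂ = D₃ = (4p+1)/3; in particular every nonzero element of O^T has nrd ≥ 3, and every element of O^T not lying in the ℝ-span of β₁ has nrd ≥ (4p+1)/3. -/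
open scoped Quaternion

open Submodule

/-!
Since `2x - (x + x̄) = x - x̄` and `x ↦ x - x̄` is additive, the Gross lattice is spanned by the
images `0, β₁, β₂ - β₃, β₁ - β₃` of the generators of `O`. For `w = aβ₁ + bβ₂ + cβ₃` one has
`9 nrd w = 3(3a + b + c)² + 12p(b² - bc + c²)`. The binary form is `≥ 1` unless `b = c = 0`, and
when `3a + b + c = 0` it is divisible by `3` (as `3 ∣ b + c`), hence `≥ 3`; either way
`9 nrd w ≥ 12p + 3`. When `b = c = 0`, `nrd w = 3a²`.
-/

theorem Submodule.span_triple_sub_eq {R M : Type*} [Ring R] [AddCommGroup M] [Module R M]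
    (x y z : M) : span R {x, y - z, x - z} = span R {x, y, z} := by
  have hx : x ∈ span R {x, y, z} := subset_span (by simp)
  have hy : y ∈ span R {x, y, z} := subset_span (by simp)
  have hz : z ∈ span R {x, y, z} := subset_span (by simp)
  have hx' : x ∈ span R {x, y - z, x - z} := subset_span (by simp)
  have hyz : y - z ∈ span R {x, y - z, x - z} := subset_span (by simp)
  have hxz : x - z ∈ span R {x, y - z, x - z} := subset_span (by simp)
  apply le_antisymm <;> simp only [span_le, Set.insert_subset_iff, Set.singleton_subset_iff]
  · exact ⟨hx, sub_mem hy hz, sub_mem hx hz⟩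
  · refine ⟨hx', ?_, ?_⟩
    · simpa using add_mem hyz (sub_mem hx' hxz)
    · simpa using sub_mem hx' hxz

theorem setOf_two_mul_sub_add_star_eq_span_image {A : Type*} [Ring A] [StarAddMonoid A]
    (S : Set A) :
    {y | ∃ x ∈ span ℤ S, y = 2 * x - (x + star x)} =
      (span ℤ ((fun x => x - star x) '' S) : Set A) := by
  let f : A →ₗ[ℤ] A := (AddMonoidHom.id A - (starAddEquiv : A ≃+ A).toAddMonoidHom).toIntLinearMap
  have hf : ⇑f = fun x => x - star x := rfl
  rw [← hf, ← map_span, map_coe]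
  ext y
  simp [two_mul, eq_comm, f]

namespace QuaternionAlgebra

theorem re_mul_star {R : Type*} [CommRing R] {c₁ c₂ : R} (x y : ℍ[R, c₁, c₂]) :
    (x * star y).re =
      x.re * y.re - c₁ * x.imI * y.imI - c₂ * x.imJ * y.imJ + c₁ * c₂ * x.imK * y.imK := by
  simp only [re_mul, re_star, imI_star, imJ_star, imK_star]
  ring

end QuaternionAlgebra

namespace Int

theorem one_le_sq_sub_mul_add_sq {b c : ℤ} (h : b ≠ 0 ∨ c ≠ 0) : 1 ≤ b ^ 2 - b * c + c ^ 2 := by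
  rcases h with hb | hc
  · nlinarith [sq_nonneg (2 * c - b), sq_pos_of_ne_zero hb]
  · nlinarith [sq_nonneg (2 * b - c), sq_pos_of_ne_zero hc]

theorem three_le_sq_sub_mul_add_sq {b c : ℤ} (h : b ≠ 0 ∨ c ≠ 0) (h3 : 3 ∣ b + c) :
    3 ≤ b ^ 2 - b * c + c ^ 2 := by
  have hdvd : 3 ∣ b ^ 2 - b * c + c ^ 2 := by
    obtain ⟨t, ht⟩ := h3
    exact ⟨3 * t ^ 2 - b * c, by linear_combination (b + c + 3 * t) * ht⟩
  have := one_le_sq_sub_mul_add_sq h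
  omega

theorem twelve_mul_add_three_le {p a b c : ℤ} (hp : 0 < p) (h : b ≠ 0 ∨ c ≠ 0) :
    12 * p + 3 ≤ 3 * (3 * a + b + c) ^ 2 + 12 * p * (b ^ 2 - b * c + c ^ 2) := by
  by_cases h3 : 3 ∣ b + c
  · have := three_le_sq_sub_mul_add_sq h h3
    nlinarith [sq_nonneg (3 * a + b + c)]
  · have hs : 3 * a + b + c ≠ 0 := fun hs => h3 ⟨-a, by linarith⟩
    nlinarith [sq_pos_of_ne_zero hs, one_le_sq_sub_mul_add_sq h]

end Int

namespace GrossLatticeJZero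

open QuaternionAlgebra

variable (q : ℚ)

def order : Submodule ℤ ℍ[ℚ, -3, -q] :=
  span ℤ {1, ⟨1/2, 1/2, 0, 0⟩, ⟨0, 0, 1/2, -(1/2)⟩, ⟨0, 1/3, 0, -(1/3)⟩}

def β₁ : ℍ[ℚ, -3, -q] := ⟨0, 1, 0, 0⟩

def β₂ : ℍ[ℚ, -3, -q] := ⟨0, 1/3, 1, -(1/3)⟩

def β₃ : ℍ[ℚ, -3, -q] := ⟨0, 1/3, 0, 2/3⟩

theorem grossLattice_order :
    {y | ∃ x ∈ order q, y = 2 * x - (x + star x)} =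
      (span ℤ {β₁ q, β₂ q, β₃ q} : Set ℍ[ℚ, -3, -q]) := by
  have himage : (fun x => x - star x) ''
      ({1, ⟨1/2, 1/2, 0, 0⟩, ⟨0, 0, 1/2, -(1/2)⟩, ⟨0, 1/3, 0, -(1/3)⟩} : Set ℍ[ℚ, -3, -q]) =
      {0, β₁ q, β₂ q - β₃ q, β₁ q - β₃ q} := by
    simp only [Set.image_insert_eq, Set.image_singleton, star_one, sub_self]
    congr 3 <;> ext <;> norm_num [β₁, β₂, β₃]
  rw [order, setOf_two_mul_sub_add_star_eq_span_image, himage, span_insert_zero,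
    span_triple_sub_eq]

theorem linearIndependent : LinearIndependent ℚ ![β₁ q, β₂ q, β₃ q] := by
  rw [Fintype.linearIndependent_iff]
  intro g hg
  have hcoord := congr_arg (fun x : ℍ[ℚ, -3, -q] => (x.imI, x.imJ, x.imK)) hg
  simp only [Fin.sum_univ_three, β₁, β₂, β₃, Matrix.cons_val_zero, Matrix.cons_val_one,
    Matrix.cons_val, smul_mk, mk_add_mk, smul_eq_mul, imI_zero, imJ_zero, imK_zero,
    Prod.mk.injEq] at hcoord
  obtain ⟨hI, hJ, hK⟩ := hcoord
  have h1 : g 1 = 0 := by linarith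
  have h2 : g 2 = 0 := by linarith
  have h0 : g 0 = 0 := by linarith
  intro n
  fin_cases n <;> assumption

theorem zsmul_add_zsmul_add_zsmul (a b c : ℤ) :
    a • β₁ q + b • β₂ q + c • β₃ q =
      (⟨0, a + b / 3 + c / 3, b, -b / 3 + 2 * c / 3⟩ : ℍ[ℚ, -3, -q]) := by
  simp only [β₁, β₂, β₃, smul_mk, zsmul_eq_mul, mk_add_mk]
  congr 1 <;> ring

theorem nine_mul_re_mul_star (a b c : ℤ) :
    let w := a • β₁ q + b • β₂ q + c • β₃ q
    9 * (w * star w).re = 3 * (3 * a + b + c) ^ 2 + 12 * q * (b ^ 2 - b * c + c ^ 2) := by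
  simp only [zsmul_add_zsmul_add_zsmul, re_mul_star]
  ring

variable {p : ℕ}

theorem le_re_mul_star_of_ne_zero_or_ne_zero (hp : 0 < p) {a b c : ℤ} (h : b ≠ 0 ∨ c ≠ 0) :
    let w := a • β₁ p + b • β₂ p + c • β₃ p
    (4 * (p : ℚ) + 1) / 3 ≤ (w * star w).re := by
  have hint : 12 * (p : ℚ) + 3 ≤ 3 * (3 * a + b + c) ^ 2 + 12 * p * (b ^ 2 - b * c + c ^ 2) := by
    exact_mod_cast Int.twelve_mul_add_three_le (p := p) (a := a) (by positivity) h
  have := nine_mul_re_mul_star (p : ℚ) a b c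
  intro w
  linarith

theorem le_re_mul_star_of_not_mem_span (hp : 0 < p) {w : ℍ[ℚ, -3, -(p : ℚ)]}
    (hw : w ∈ span ℤ {β₁ p, β₂ p, β₃ p}) (hw₁ : w ∉ span ℚ {β₁ p}) :
    (4 * (p : ℚ) + 1) / 3 ≤ (w * star w).re := by
  obtain ⟨a, b, c, rfl⟩ := mem_span_triple.1 hw
  refine le_re_mul_star_of_ne_zero_or_ne_zero hp (not_and_or.1 ?_)
  rintro ⟨rfl, rfl⟩
  exact hw₁ (mem_span_singleton.2 ⟨a, by simp [Int.cast_smul_eq_zsmul]⟩)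

theorem three_le_re_mul_star (hp : 2 ≤ p) {w : ℍ[ℚ, -3, -(p : ℚ)]}
    (hw : w ∈ span ℤ {β₁ p, β₂ p, β₃ p}) (hw₀ : w ≠ 0) : 3 ≤ (w * star w).re := by
  obtain ⟨a, b, c, rfl⟩ := mem_span_triple.1 hw
  by_cases hbc : b = 0 ∧ c = 0
  · obtain ⟨rfl, rfl⟩ := hbc
    have ha : a ≠ 0 := by rintro rfl; simp at hw₀
    have ha' : (1 : ℚ) ≤ a ^ 2 := by
      exact_mod_cast (one_le_sq_iff_one_le_abs _).2 (Int.one_le_abs ha)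
    have := nine_mul_re_mul_star (p : ℚ) a 0 0
    push_cast at this
    linarith
  · have hp' : (2 : ℚ) ≤ p := by exact_mod_cast hp
    have := le_re_mul_star_of_ne_zero_or_ne_zero (a := a) (by omega : 0 < p) (not_and_or.1 hbc)
    linarith

end GrossLatticeJZero

open GrossLatticeJZero QuaternionAlgebra in
theorem stmt_12_general (p : ℕ) (hp : p.Prime)
    (i j k : ℍ[ℚ, -3, -(p : ℚ)])
    (hi : i = ⟨0, 1, 0, 0⟩) (hj : j = ⟨0, 0, 1, 0⟩) (hk : k = i * j)
    (O : Submodule ℤ ℍ[ℚ, -3, -(p : ℚ)])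
    (hO : O = Submodule.span ℤ
      ({1, ((1 : ℚ)/2) • (1 + i), ((1 : ℚ)/2) • (j - k), ((1 : ℚ)/3) • (i - k)} :
        Set ℍ[ℚ, -3, -(p : ℚ)]))
    (β₁ β₂ β₃ : ℍ[ℚ, -3, -(p : ℚ)])
    (hβ₁ : β₁ = i) (hβ₂ : β₂ = ((1 : ℚ)/3) • (i + 3 * j - k))
    (hβ₃ : β₃ = ((1 : ℚ)/3) • (i + 2 * k)) :
    -- (a) the Gross lattice of `O` is spanned by `β₁, β₂, β₃`
    {y | ∃ x ∈ O, y = 2 * x - (x + star x)} =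
      (Submodule.span ℤ ({β₁, β₂, β₃} : Set ℍ[ℚ, -3, -(p : ℚ)]) : Set ℍ[ℚ, -3, -(p : ℚ)]) ∧
    -- (b) the Gram matrix of `(β₁, β₂, β₃)`
    (β₁ * star β₁).re = 3 ∧ (β₁ * star β₂).re = 1 ∧ (β₁ * star β₃).re = 1 ∧
    (β₂ * star β₂).re = (4 * (p : ℚ) + 1) / 3 ∧
    (β₂ * star β₃).re = -((2 * (p : ℚ) - 1) / 3) ∧
    (β₃ * star β₃).re = (4 * (p : ℚ) + 1) / 3 ∧
    -- (c) the basis attains the successive minima `D₁ = 3`, `D₂ = D₃ = (4p+1)/3`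
    LinearIndependent ℚ ![β₁, β₂, β₃] ∧
    (∀ w ∈ Submodule.span ℤ ({β₁, β₂, β₃} : Set ℍ[ℚ, -3, -(p : ℚ)]), w ≠ 0 →
      3 ≤ (w * star w).re) ∧
    (∀ w ∈ Submodule.span ℤ ({β₁, β₂, β₃} : Set ℍ[ℚ, -3, -(p : ℚ)]),
      w ∉ Submodule.span ℚ ({β₁} : Set ℍ[ℚ, -3, -(p : ℚ)]) →
      (4 * (p : ℚ) + 1) / 3 ≤ (w * star w).re) := by
  subst hi hj hk
  obtain rfl : β₁ = GrossLatticeJZero.β₁ p := hβ₁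
  obtain rfl : β₂ = GrossLatticeJZero.β₂ p := by rw [hβ₂]; ext <;> norm_num [GrossLatticeJZero.β₂]
  obtain rfl : β₃ = GrossLatticeJZero.β₃ p := by rw [hβ₃]; ext <;> norm_num [GrossLatticeJZero.β₃]
  obtain rfl : O = order p := by
    rw [hO, order]
    congr 4 <;> ext <;> norm_num
  refine ⟨grossLattice_order p, ?_, ?_, ?_, ?_, ?_, ?_, linearIndependent p,
    fun w hw hw₀ => three_le_re_mul_star hp.two_le hw hw₀,
    fun w hw hw₁ => le_re_mul_star_of_not_mem_span hp.pos hw hw₁⟩ <;>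
  · simp only [re_mul_star, GrossLatticeJZero.β₁, GrossLatticeJZero.β₂, GrossLatticeJZero.β₃]
    ring

/-- Normalized successive minimal basis of the Gross lattice of the supersingular elliptic
curve with `j`-invariant `0` (for `p ≡ 2 mod 3`): in `B = ℍ[ℚ, -3, -p]`, with
`O = ⟨1, (1+i)/2, (j-k)/2, (i-k)/3⟩`, the Gross lattice `{2x - trd x : x ∈ O}` is spanned by
`β₁ = i`, `β₂ = (i+3j-k)/3`, `β₃ = (i+2k)/3`, whose Gram matrix (for the pairing
`(x,y) = (1/2)·trd(x·ȳ)`) is `[[3, 1, 1], [1, (4p+1)/3, -(2p-1)/3], [1, -(2p-1)/3, (4p+1)/3]]`,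
and this basis attains the successive minima `D₁ = 3`, `D₂ = D₃ = (4p+1)/3`. -/
theorem stmt_12 (p : ℕ) (hp : p.Prime) (hmod : p % 3 = 2)
    (i j k : ℍ[ℚ, -3, -(p : ℚ)])
    (hi : i = ⟨0, 1, 0, 0⟩) (hj : j = ⟨0, 0, 1, 0⟩) (hk : k = i * j)
    (O : Submodule ℤ ℍ[ℚ, -3, -(p : ℚ)])
    (hO : O = Submodule.span ℤ
      ({1, ((1 : ℚ)/2) • (1 + i), ((1 : ℚ)/2) • (j - k), ((1 : ℚ)/3) • (i - k)} :
        Set ℍ[ℚ, -3, -(p : ℚ)]))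
    (β₁ β₂ β₃ : ℍ[ℚ, -3, -(p : ℚ)])
    (hβ₁ : β₁ = i) (hβ₂ : β₂ = ((1 : ℚ)/3) • (i + 3 * j - k))
    (hβ₃ : β₃ = ((1 : ℚ)/3) • (i + 2 * k)) :
    -- (a) the Gross lattice of `O` is spanned by `β₁, β₂, β₃`
    {y | ∃ x ∈ O, y = 2 * x - (x + star x)} =
      (Submodule.span ℤ ({β₁, β₂, β₃} : Set ℍ[ℚ, -3, -(p : ℚ)]) : Set ℍ[ℚ, -3, -(p : ℚ)]) ∧
    -- (b) the Gram matrix of `(β₁, β₂, β₃)`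
    (β₁ * star β₁).re = 3 ∧ (β₁ * star β₂).re = 1 ∧ (β₁ * star β₃).re = 1 ∧
    (β₂ * star β₂).re = (4 * (p : ℚ) + 1) / 3 ∧
    (β₂ * star β₃).re = -((2 * (p : ℚ) - 1) / 3) ∧
    (β₃ * star β₃).re = (4 * (p : ℚ) + 1) / 3 ∧
    -- (c) the basis attains the successive minima `D₁ = 3`, `D₂ = D₃ = (4p+1)/3`
    LinearIndependent ℚ ![β₁, β₂, β₃] ∧
    (∀ w ∈ Submodule.span ℤ ({β₁, β₂, β₃} : Set ℍ[ℚ, -3, -(p : ℚ)]), w ≠ 0 →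
      3 ≤ (w * star w).re) ∧
    (∀ w ∈ Submodule.span ℤ ({β₁, β₂, β₃} : Set ℍ[ℚ, -3, -(p : ℚ)]),
      w ∉ Submodule.span ℚ ({β₁} : Set ℍ[ℚ, -3, -(p : ℚ)]) →
      (4 * (p : ℚ) + 1) / 3 ≤ (w * star w).re) :=
  stmt_12_general p hp i j k hi hj hk O hO β₁ β₂ β₃ hβ₁ hβ₂ hβ₃
end

section
/- Work in the quaternion algebra B = ℍ[ℚ, −1, −1] (the rational quaternions), and let O be the Hurwitz order, i.e., the ℤ-span of {1, i, j, (1 + i + j + k)/2}. Let O^T = {2x − trd(x) : x ∈ O} be its Gross lattice, and set β₁ = i + j + k, β₂ = i + j − k, β₃ = i − j + k. Then: (a) O^T equals the ℤ-span of {β₁, β₂, β₃}; (b) with pairing (x, y) = (1/2)·trd(x·ȳ), the Gram matrix of (β₁, β₂, β₃) is [[3, 1, 1], [1, 3, −1], [1, −1, 3]]; (c) O^T is well-rounded: every nonzero element of O^T has nrd ≥ 3, and β₁, β₂, β₃ are three ℝ-linearly independent elements of nrd exactly 3, so all three successive minima equal 3; and (d) O^T has no orthogonal ℤ-basis, i.e.,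 there is no ℤ-basis (γ₁, γ₂, γ₃) of O^T with (γ₁, γ₂) = (γ₁, γ₃) = (γ₂, γ₃) = 0. -/
/-!
The Gross lattice is the image of `O` under the `ℤ`-linear map `x ↦ x - x̄`, which sends the
generators `1, i, j, (1 + i + j + k)/2` to `0, 2i, 2j, i + j + k`; these span the same lattice
as `β₁, β₂, β₃`. Its elements are the pure quaternions `Xi + Yj + Zk` with `X, Y, Z ∈ ℤ` of equal
parity, of norm `X² + Y² + Z² ≥ 3` unless zero.

If `γ` is an orthogonal basis of a lattice of minimum `m`, a vector of norm `m` has a coefficient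
vector of squared length one, and the parity of `∑ (aᵢ - eᵢ)²` forces two such vectors with
positive inner product to coincide. But `β₁ ≠ β₂` are minimal vectors with `(β₁, β₂) = 1`.
-/

open scoped Quaternion
open Finset Submodule

section DiagonalForm

variable {K ι : Type*} [CommRing K] [LinearOrder K] [IsStrictOrderedRing K] [Fintype ι]

theorem Int.sum_mul_self_le_one_of_lt_two_mul {m : K} (hm : 0 < m) {n : ι → K}
    (hn : ∀ i, m ≤ n i) {d : ι → ℤ} (hd : ∑ i, (d i * d i : K) * n i < 2 * m) :
    ∑ i, d i * d i ≤ 1 := by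
  have hle : m * ∑ i, (d i * d i : K) ≤ ∑ i, (d i * d i : K) * n i := by
    rw [mul_sum]
    refine sum_le_sum fun i _ => ?_
    rw [mul_comm]
    exact mul_le_mul_of_nonneg_left (hn i) (mul_self_nonneg _)
  have hlt : ((∑ i, d i * d i : ℤ) : K) < 2 := by
    push_cast
    nlinarith
  exact Int.lt_add_one_iff.mp (by exact_mod_cast hlt)

theorem Int.eq_of_weighted_mul_self_eq {m : K} (hm : 0 < m) {n : ι → K} (hn : ∀ i, m ≤ n i)
    {a e : ι → ℤ} (ha : ∑ i, (a i * a i : K) * n i = m) (he : ∑ i, (e i * e i : K) * n i = m)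
    (hae : 0 < ∑ i, (a i * e i : K) * n i) : a = e := by
  have hpos {d : ι → ℤ} (hdm : ∑ i, (d i * d i : K) * n i = m) : 0 < ∑ i, d i * d i := by
    refine (sum_nonneg fun i _ => mul_self_nonneg (d i)).lt_of_ne' fun hd0 => hm.ne ?_
    rw [sum_mul_self_eq_zero_iff] at hd0
    simp [← hdm, hd0]
  have hdiff : ∑ i, ((a - e) i * (a - e) i : K) * n i
      = 2 * m - 2 * ∑ i, (a i * e i : K) * n i := calc
    _ = ∑ i, ((a i * a i : K) * n i + (e i * e i : K) * n i - 2 * ((a i * e i : K) * n i)) :=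
      sum_congr rfl fun i _ => by push_cast [Pi.sub_apply]; ring
    _ = _ := by rw [sum_sub_distrib, sum_add_distrib, ← mul_sum, ha, he]; ring
  have ha1 := Int.sum_mul_self_le_one_of_lt_two_mul hm hn (d := a) (by linarith)
  have he1 := Int.sum_mul_self_le_one_of_lt_two_mul hm hn (d := e) (by linarith)
  have hd1 := Int.sum_mul_self_le_one_of_lt_two_mul hm hn (d := a - e) (by linarith)
  have ha0 := hpos ha
  have he0 := hpos he
  have hd0 := sum_nonneg fun i (_ : i ∈ univ) => mul_self_nonneg ((a - e) i)
  have hsq : ∑ i, (a - e) i * (a - e) i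
      = ∑ i, a i * a i + ∑ i, e i * e i - 2 * ∑ i, a i * e i := by
    rw [mul_sum, ← sum_add_distrib, ← sum_sub_distrib]
    exact sum_congr rfl fun i _ => by simp only [Pi.sub_apply]; ring
  -- `∑ (aᵢ - eᵢ)² = 2 - 2 ∑ aᵢ eᵢ` is even and at most one
  have h0 : ∑ i, (a - e) i * (a - e) i = 0 := by omega
  rw [sum_mul_self_eq_zero_iff] at h0
  exact funext fun i => sub_eq_zero.mp (h0 i (mem_univ i))

end DiagonalForm

namespace LinearMap.BilinForm

variable {K V ι : Type*} [CommRing K] [AddCommGroup V] [Module K V] [Fintype ι]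

theorem apply_sum_zsmul_of_isOrthoᵢ {B : LinearMap.BilinForm K V} {γ : ι → V}
    (hγ : B.IsOrthoᵢ γ) (a e : ι → ℤ) :
    B (∑ i, a i • γ i) (∑ i, e i • γ i) = ∑ i, (a i * e i : K) * B (γ i) (γ i) := by
  simp only [map_sum, LinearMap.sum_apply, map_zsmul, LinearMap.smul_apply, zsmul_eq_mul]
  refine sum_congr rfl fun i _ => ?_
  rw [sum_eq_single i (fun j _ hji => by rw [hγ hji, mul_zero]) (by simp)]
  ring

theorem eq_of_mem_span_of_isOrthoᵢ [LinearOrder K] [IsStrictOrderedRing K]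
    {B : LinearMap.BilinForm K V} {γ : ι → V} (hγ : B.IsOrthoᵢ γ) {m : K} (hm : 0 < m)
    (hmin : ∀ i, m ≤ B (γ i) (γ i)) {v w : V} (hv : v ∈ span ℤ (Set.range γ))
    (hw : w ∈ span ℤ (Set.range γ)) (hvv : B v v = m) (hww : B w w = m) (hvw : 0 < B v w) :
    v = w := by
  obtain ⟨a, rfl⟩ := (mem_span_range_iff_exists_fun ℤ).mp hv
  obtain ⟨e, rfl⟩ := (mem_span_range_iff_exists_fun ℤ).mp hw
  rw [apply_sum_zsmul_of_isOrthoᵢ hγ] at hvv hww hvw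
  rw [Int.eq_of_weighted_mul_self_eq hm hmin hvv hww hvw]

end LinearMap.BilinForm

namespace QuaternionAlgebra

variable {R : Type*} [CommRing R] {c₁ c₃ : R}

/-- The pairing `(x, y) = ½ trd(x ȳ)`, the polar form of the reduced norm. -/
def reMulStarForm : LinearMap.BilinForm R ℍ[R,c₁,c₃] :=
  LinearMap.mk₂ R (fun x y => (x * star y).re) (fun _ _ _ => by simp [add_mul])
    (fun _ _ _ => by simp) (fun _ _ _ => by simp [mul_add]) (fun _ _ _ => by simp)

@[simp]
theorem reMulStarForm_apply (x y : ℍ[R,c₁,c₃]) : reMulStarForm x y = (x * star y).re := rfl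

theorem re_mul_star_comm (x y : ℍ[R,c₁,c₃]) : (x * star y).re = (y * star x).re := by
  simp only [re_mul, re_star, imI_star, imJ_star, imK_star, zero_mul, add_zero]
  ring

theorem isOrthoᵢ_reMulStarForm_three {x y z : ℍ[R,c₁,c₃]} (hxy : (x * star y).re = 0)
    (hxz : (x * star z).re = 0) (hyz : (y * star z).re = 0) :
    reMulStarForm.IsOrthoᵢ ![x, y, z] := by
  have hyx := (re_mul_star_comm y x).trans hxy
  have hzx := (re_mul_star_comm z x).trans hxz
  have hzy := (re_mul_star_comm z y).trans hyz
  intro i j hij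
  fin_cases i <;> fin_cases j <;> first | exact absurd rfl hij | assumption

end QuaternionAlgebra

theorem Int.three_le_sq_add_sq_add_sq_of_even_sub {X Y Z : ℤ} (hXY : Even (X - Y))
    (hXZ : Even (X - Z)) (h : X ≠ 0 ∨ Y ≠ 0 ∨ Z ≠ 0) : 3 ≤ X ^ 2 + Y ^ 2 + Z ^ 2 := by
  have one_le_sq (n : ℤ) (hn : n ≠ 0) : 1 ≤ n ^ 2 :=
    (one_le_sq_iff_one_le_abs n).mpr (Int.one_le_abs hn)
  rcases Int.even_or_odd X with ⟨x, rfl⟩ | hX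
  · obtain ⟨y, rfl⟩ := (Int.even_sub.mp hXY).mp ⟨x, rfl⟩
    obtain ⟨z, rfl⟩ := (Int.even_sub.mp hXZ).mp ⟨x, rfl⟩
    have : 1 ≤ x ^ 2 + y ^ 2 + z ^ 2 := by
      rcases h with h | h | h
      · nlinarith [one_le_sq x (by omega), sq_nonneg y, sq_nonneg z]
      · nlinarith [one_le_sq y (by omega), sq_nonneg x, sq_nonneg z]
      · nlinarith [one_le_sq z (by omega), sq_nonneg x, sq_nonneg y]
    nlinarith
  · have hY : Odd Y := by
      rwa [← Int.not_even_iff_odd, ← Int.even_sub.mp hXY, Int.not_even_iff_odd]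
    have hZ : Odd Z := by
      rwa [← Int.not_even_iff_odd, ← Int.even_sub.mp hXZ, Int.not_even_iff_odd]
    have := one_le_sq X (by rintro rfl; simp at hX)
    have := one_le_sq Y (by rintro rfl; simp at hY)
    have := one_le_sq Z (by rintro rfl; simp at hZ)
    linarith

section Hurwitz

open QuaternionAlgebra

local notation "Λ" => span ℤ ({⟨0, 1, 1, 1⟩, ⟨0, 1, 1, -1⟩, ⟨0, 1, -1, 1⟩} : Set ℍ[ℚ,-1,-1])

theorem exists_eq_mk_of_mem_gross {w : ℍ[ℚ,-1,-1]} (hw : w ∈ Λ) :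
    ∃ X Y Z : ℤ, Even (X - Y) ∧ Even (X - Z) ∧ w = ⟨0, X, Y, Z⟩ := by
  obtain ⟨a, b, c, rfl⟩ := mem_span_triple.mp hw
  refine ⟨a + b + c, a + b - c, a - b + c, ⟨c, by ring⟩, ⟨b, by ring⟩, ?_⟩
  ext <;> simp <;> ring

theorem three_le_re_mul_star_of_mem_gross {w : ℍ[ℚ,-1,-1]} (hw : w ∈ Λ) (hw0 : w ≠ 0) :
    3 ≤ (w * star w).re := by
  obtain ⟨X, Y, Z, hXY, hXZ, rfl⟩ := exists_eq_mk_of_mem_gross hw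
  have hne : X ≠ 0 ∨ Y ≠ 0 ∨ Z ≠ 0 := by
    contrapose! hw0
    obtain ⟨rfl, rfl, rfl⟩ := hw0
    ext <;> simp
  calc (3 : ℚ) ≤ ((X ^ 2 + Y ^ 2 + Z ^ 2 : ℤ) : ℚ) := by
        exact_mod_cast Int.three_le_sq_add_sq_add_sq_of_even_sub hXY hXZ hne
    _ = _ := by simp; ring

theorem gross_hurwitz_eq :
    {y | ∃ x ∈ span ℤ ({1, ⟨0, 1, 0, 0⟩, ⟨0, 0, 1, 0⟩, ⟨1/2, 1/2, 1/2, 1/2⟩} : Set ℍ[ℚ,-1,-1]),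
      y = 2 * x - (x + star x)} = (Λ : Set ℍ[ℚ,-1,-1]) := by
  let f : ℍ[ℚ,-1,-1] →ₗ[ℤ] ℍ[ℚ,-1,-1] :=
    (AddMonoidHom.id _ - (starAddEquiv : ℍ[ℚ,-1,-1] ≃+ _).toAddMonoidHom).toIntLinearMap
  have hf (x : ℍ[ℚ,-1,-1]) : f x = 2 * x - (x + star x) := by
    change x - star x = _
    rw [two_mul]
    abel
  have hgen : f '' {1, ⟨0, 1, 0, 0⟩, ⟨0, 0, 1, 0⟩, ⟨1/2, 1/2, 1/2, 1/2⟩}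
      = {0, ⟨0, 2, 0, 0⟩, ⟨0, 0, 2, 0⟩, ⟨0, 1, 1, 1⟩} := by
    simp only [Set.image_insert_eq, Set.image_singleton, hf]
    congr <;> ext <;> norm_num [star_mk]
  have hspan : span ℤ ({0, ⟨0, 2, 0, 0⟩, ⟨0, 0, 2, 0⟩, ⟨0, 1, 1, 1⟩} : Set ℍ[ℚ,-1,-1]) = Λ := by
    rw [span_insert_zero]
    apply le_antisymm <;> rw [span_le] <;>
      simp only [Set.insert_subset_iff, Set.singleton_subset_iff, SetLike.mem_coe]
    · exact ⟨mem_span_triple.mpr ⟨0, 1, 1, by ext <;> norm_num⟩,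
        mem_span_triple.mpr ⟨1, 0, -1, by ext <;> norm_num⟩,
        mem_span_triple.mpr ⟨1, 0, 0, by ext <;> norm_num⟩⟩
    · exact ⟨mem_span_triple.mpr ⟨0, 0, 1, by ext <;> norm_num⟩,
        mem_span_triple.mpr ⟨1, 1, -1, by ext <;> norm_num⟩,
        mem_span_triple.mpr ⟨0, -1, 1, by ext <;> norm_num⟩⟩
  rw [← hspan, ← hgen, ← map_span, map_coe]
  ext y
  simp [hf, eq_comm]

theorem linearIndependent_gross_basis :
    LinearIndependent ℚ ![(⟨0, 1, 1, 1⟩ : ℍ[ℚ,-1,-1]), ⟨0, 1, 1, -1⟩, ⟨0, 1, -1, 1⟩] := by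
  rw [Fintype.linearIndependent_iff]
  intro g hg
  simp [Fin.sum_univ_three, QuaternionAlgebra.ext_iff] at hg
  obtain ⟨h₁, h₂, h₃⟩ := hg
  intro i
  fin_cases i <;> simp <;> linarith

theorem not_exists_orthogonal_basis_gross :
    ¬ ∃ γ₁ γ₂ γ₃ : ℍ[ℚ,-1,-1], span ℤ {γ₁, γ₂, γ₃} = Λ ∧ LinearIndependent ℤ ![γ₁, γ₂, γ₃] ∧
      (γ₁ * star γ₂).re = 0 ∧ (γ₁ * star γ₃).re = 0 ∧ (γ₂ * star γ₃).re = 0 := by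
  rintro ⟨γ₁, γ₂, γ₃, hspan, hind, h₁₂, h₁₃, h₂₃⟩
  have hrange : span ℤ (Set.range ![γ₁, γ₂, γ₃])
      = span ℤ {⟨0, 1, 1, 1⟩, ⟨0, 1, 1, -1⟩, ⟨0, 1, -1, 1⟩} := by
    rw [← hspan, Matrix.range_cons, Matrix.range_cons, Matrix.range_cons_empty,
      Set.singleton_union, Set.singleton_union]
  have hmin (i : Fin 3) : 3 ≤ reMulStarForm (![γ₁, γ₂, γ₃] i) (![γ₁, γ₂, γ₃] i) :=
    three_le_re_mul_star_of_mem_gross (hrange ▸ subset_span ⟨i, rfl⟩) (hind.ne_zero i)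
  have hβ₁_eq_β₂ := LinearMap.BilinForm.eq_of_mem_span_of_isOrthoᵢ
    (isOrthoᵢ_reMulStarForm_three h₁₂ h₁₃ h₂₃) three_pos hmin (v := ⟨0, 1, 1, 1⟩)
    (w := ⟨0, 1, 1, -1⟩) (hrange ▸ subset_span (by simp)) (hrange ▸ subset_span (by simp))
    (by norm_num) (by norm_num) (by norm_num)
  norm_num [QuaternionAlgebra.ext_iff] at hβ₁_eq_β₂

end Hurwitz

/-- The Gross lattice of the Hurwitz order `O = ⟨1, i, j, (1+i+j+k)/2⟩` in `ℍ[ℚ, -1, -1]`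
is spanned by `β₁ = i+j+k`, `β₂ = i+j-k`, `β₃ = i-j+k`; the Gram matrix of this basis (for
the pairing `(x,y) = (1/2)·trd(x·ȳ)`) is `[[3, 1, 1], [1, 3, -1], [1, -1, 3]]`; the lattice
is well-rounded with all successive minima equal to `3`; and it admits no orthogonal
`ℤ`-basis. -/
theorem stmt_15 (i j k : ℍ[ℚ, -1, -1])
    (hi : i = ⟨0, 1, 0, 0⟩) (hj : j = ⟨0, 0, 1, 0⟩) (hk : k = i * j)
    (O : Submodule ℤ ℍ[ℚ, -1, -1])
    (hO : O = Submodule.span ℤ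
      ({1, i, j, ((1 : ℚ)/2) • (1 + i + j + k)} : Set ℍ[ℚ, -1, -1]))
    (β₁ β₂ β₃ : ℍ[ℚ, -1, -1])
    (hβ₁ : β₁ = i + j + k) (hβ₂ : β₂ = i + j - k) (hβ₃ : β₃ = i - j + k) :
    -- (a) the Gross lattice of `O` is spanned by `β₁, β₂, β₃`
    {y | ∃ x ∈ O, y = 2 * x - (x + star x)} =
      (Submodule.span ℤ ({β₁, β₂, β₃} : Set ℍ[ℚ, -1, -1]) : Set ℍ[ℚ, -1, -1]) ∧
    -- (b) the Gram matrix of `(β₁, β₂, β₃)`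
    (β₁ * star β₁).re = 3 ∧ (β₁ * star β₂).re = 1 ∧ (β₁ * star β₃).re = 1 ∧
    (β₂ * star β₂).re = 3 ∧ (β₂ * star β₃).re = -1 ∧ (β₃ * star β₃).re = 3 ∧
    -- (c) the lattice is well-rounded: all three successive minima equal 3
    LinearIndependent ℚ ![β₁, β₂, β₃] ∧
    (∀ w ∈ Submodule.span ℤ ({β₁, β₂, β₃} : Set ℍ[ℚ, -1, -1]), w ≠ 0 →
      3 ≤ (w * star w).re) ∧
    -- (d) no orthogonal `ℤ`-basis
    ¬ ∃ γ₁ γ₂ γ₃ : ℍ[ℚ, -1, -1],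
      Submodule.span ℤ ({γ₁, γ₂, γ₃} : Set ℍ[ℚ, -1, -1]) =
        Submodule.span ℤ ({β₁, β₂, β₃} : Set ℍ[ℚ, -1, -1]) ∧
      LinearIndependent ℤ ![γ₁, γ₂, γ₃] ∧
      (γ₁ * star γ₂).re = 0 ∧ (γ₁ * star γ₃).re = 0 ∧ (γ₂ * star γ₃).re = 0 := by
  obtain rfl : β₁ = ⟨0, 1, 1, 1⟩ := by subst_vars; ext <;> simp
  obtain rfl : β₂ = ⟨0, 1, 1, -1⟩ := by subst_vars; ext <;> simp
  obtain rfl : β₃ = ⟨0, 1, -1, 1⟩ := by subst_vars; ext <;> simp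
  obtain rfl : O = span ℤ {1, ⟨0, 1, 0, 0⟩, ⟨0, 0, 1, 0⟩, ⟨1/2, 1/2, 1/2, 1/2⟩} := by
    subst_vars; congr; ext <;> norm_num
  refine ⟨gross_hurwitz_eq, ?_, ?_, ?_, ?_, ?_, ?_, linearIndependent_gross_basis,
    fun _ => three_le_re_mul_star_of_mem_gross, not_exists_orthogonal_basis_gross⟩
  all_goals norm_num
end

section
/- Let p ≥ 5 be a prime and let a ≤ b ≤ c be positive integers, each congruent to 0 or 3 modulo 4, with a·b·c = 4·p². Then a = 4, b = c = p, and p ≡ 3 (mod 4). (This is the arithmetic core of the proof that for p ≥ 5 the Gross lattice of a supersingular elliptic curve is never orthogonal: an orthogonal basis would have norms a, b, c with product equal to det(O^T) = 4p² and each norm ≡ 0, 3 mod 4.) -/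
private lemma aux_odd_div (p x : ℕ) (hp : p.Prime) (hpo : p % 2 = 1)
    (hx : x ∣ 4 * p ^ 2) (h3 : x % 4 = 3) : x = p ∧ p % 4 = 3 := by
  have hcop : Nat.Coprime x 4 := by
    have h2 : Nat.Coprime x 2 := by
      rw [Nat.coprime_comm]
      refine (Nat.Prime.coprime_iff_not_dvd Nat.prime_two).mpr ?_
      rintro ⟨k, hk⟩; omega
    simpa using h2.pow_right 2
  have hxp : x ∣ p ^ 2 := hcop.dvd_of_dvd_mul_left hx
  obtain ⟨i, hi, rfl⟩ := (Nat.dvd_prime_pow hp).mp hxp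
  interval_cases i
  · simp at h3
  · exact ⟨pow_one p, by simpa using h3⟩
  · exfalso
    have h4 : p % 4 = 1 ∨ p % 4 = 3 := by omega
    have : p ^ 2 % 4 = 1 := by
      rw [Nat.pow_mod]; rcases h4 with h | h <;> rw [h]
    omega

private lemma aux_two4 (p x y : ℕ) (hpo : p % 2 = 1) (hx : x % 4 = 0) (hy : y % 4 = 0)
    (hxy : x * y ∣ 4 * p ^ 2) : False := by
  have h16 : (16 : ℕ) ∣ 4 * p ^ 2 :=
    dvd_trans (mul_dvd_mul (Nat.dvd_of_mod_eq_zero hx) (Nat.dvd_of_mod_eq_zero hy)) hxy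
  obtain ⟨k, hk⟩ := h16
  have h2 : (2 : ℕ) ∣ p ^ 2 := ⟨2 * k, by omega⟩
  have := Nat.Prime.dvd_of_dvd_pow Nat.prime_two h2
  omega

/-- If `p ≥ 5` is prime and `a ≤ b ≤ c` are positive integers, each congruent to `0` or `3`
mod `4`, with `a·b·c = 4p²`, then `a = 4`, `b = c = p` and `p ≡ 3 mod 4`. -/
theorem stmt_16 (p : ℕ) (hp : p.Prime) (hp5 : 5 ≤ p) (a b c : ℕ)
    (ha : 0 < a) (hab : a ≤ b) (hbc : b ≤ c)
    (ha4 : a % 4 = 0 ∨ a % 4 = 3) (hb4 : b % 4 = 0 ∨ b % 4 = 3)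
    (hc4 : c % 4 = 0 ∨ c % 4 = 3)
    (habc : a * b * c = 4 * p ^ 2) :
    a = 4 ∧ b = p ∧ c = p ∧ p % 4 = 3 := by
  have hpo : p % 2 = 1 := Nat.odd_iff.mp (hp.odd_of_ne_two (by omega))
  have hpos : 0 < p ^ 2 := pow_pos (by omega) 2
  have hda : a ∣ 4 * p ^ 2 := ⟨b * c, by rw [← habc]; ring⟩
  have hdb : b ∣ 4 * p ^ 2 := ⟨a * c, by rw [← habc]; ring⟩
  have hdc : c ∣ 4 * p ^ 2 := ⟨a * b, by rw [← habc]; ring⟩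
  rcases ha4 with ha4 | ha4 <;> rcases hb4 with hb4 | hb4 <;> rcases hc4 with hc4 | hc4
  · exact (aux_two4 p a b hpo ha4 hb4 ⟨c, habc.symm⟩).elim
  · exact (aux_two4 p a b hpo ha4 hb4 ⟨c, habc.symm⟩).elim
  · exact (aux_two4 p a c hpo ha4 hc4 ⟨b, by rw [← habc]; ring⟩).elim
  · -- a ≡ 0, b ≡ c ≡ 3 : the main case
    obtain ⟨hbp, hp3⟩ := aux_odd_div p b hp hpo hdb hb4
    obtain ⟨hcp, _⟩ := aux_odd_div p c hp hpo hdc hc4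
    have h4 : a * p ^ 2 = 4 * p ^ 2 := by rw [← habc, hbp, hcp]; ring
    exact ⟨Nat.eq_of_mul_eq_mul_right hpos h4, hbp, hcp, hp3⟩
  · exact (aux_two4 p b c hpo hb4 hc4 ⟨a, by rw [← habc]; ring⟩).elim
  · -- b ≡ 0, a ≡ c ≡ 3
    obtain ⟨hap, _⟩ := aux_odd_div p a hp hpo hda ha4
    obtain ⟨hcp, _⟩ := aux_odd_div p c hp hpo hdc hc4
    have h4 : b * p ^ 2 = 4 * p ^ 2 := by rw [← habc, hap, hcp]; ring
    have hb' : b = 4 := Nat.eq_of_mul_eq_mul_right hpos h4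
    omega
  · -- c ≡ 0, a ≡ b ≡ 3
    obtain ⟨hap, _⟩ := aux_odd_div p a hp hpo hda ha4
    obtain ⟨hbp, _⟩ := aux_odd_div p b hp hpo hdb hb4
    have h4 : c * p ^ 2 = 4 * p ^ 2 := by rw [← habc, hap, hbp]; ring
    have hc' : c = 4 := Nat.eq_of_mul_eq_mul_right hpos h4
    omega
  · -- all ≡ 3 : product would be odd
    exfalso
    have h2 : (2 : ℕ) ∣ a * b * c := by rw [habc]; exact ⟨2 * p ^ 2, by ring⟩
    rcases Nat.prime_two.dvd_mul.mp h2 with h | h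
    · rcases Nat.prime_two.dvd_mul.mp h with ⟨k, hk⟩ | ⟨k, hk⟩ <;> omega
    · obtain ⟨k, hk⟩ := h; omega
end

section
/- Let V be a real inner product space and let v₁, v₂ ∈ V with 0 < ‖v₁‖² ≤ ‖v₂‖² and 2·|⟪v₁, v₂⟫| ≤ ‖v₁‖². If x₁ and x₂ are nonzero integers such that ‖x₁·v₁ + x₂·v₂‖² ≤ ‖v₂‖², then x₁ ∈ {1, −1}, x₂ ∈ {1, −1}, 2·|⟪v₁, v₂⟫| = ‖v₁‖², and ‖x₁·v₁ + x₂·v₂‖² = ‖v₂‖². (This is the key lattice computation in the proof that the rank-2 sublattice generated by vectors attaining the first two successive minima of the Gross lattice is unique.) -/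
open scoped RealInnerProductSpace

/-!
Write `a = ‖v₁‖²`, `b = ⟪v₁, v₂⟫`, `c = ‖v₂‖²` and expand
`‖x₁ v₁ + x₂ v₂‖² = x₁² a + 2 x₁ x₂ b + x₂² c`. Using `2|b| ≤ a` and then `a ≤ c` on the
coefficient `x₂² - 1 ≥ 0`, the hypothesis forces `(x₁² - |x₁ x₂| + x₂² - 1) a ≤ 0`, i.e.
`x₁² - |x₁ x₂| + x₂² ≤ 1`. For nonzero integers the left side is `(|x₁| - |x₂|)² + |x₁ x₂| ≥ 1`,
with equality only at `|x₁| = |x₂| = 1`; then every inequality used must be an equality.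
-/

section InnerProductSpace

variable {V : Type*} [NormedAddCommGroup V] [InnerProductSpace ℝ V]

theorem norm_smul_add_smul_sq (t₁ t₂ : ℝ) (v₁ v₂ : V) :
    ‖t₁ • v₁ + t₂ • v₂‖ ^ 2 =
      t₁ ^ 2 * ‖v₁‖ ^ 2 + 2 * (t₁ * t₂) * ⟪v₁, v₂⟫ + t₂ ^ 2 * ‖v₂‖ ^ 2 := by
  rw [norm_add_sq_real, norm_smul, norm_smul, real_inner_smul_left, real_inner_smul_right,
    Real.norm_eq_abs, Real.norm_eq_abs, mul_pow, mul_pow, sq_abs, sq_abs]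
  ring

theorem neg_mul_abs_le_two_mul_inner {v₁ v₂ : V} (hsr : 2 * |⟪v₁, v₂⟫| ≤ ‖v₁‖ ^ 2) (t : ℝ) :
    -(|t| * ‖v₁‖ ^ 2) ≤ 2 * t * ⟪v₁, v₂⟫ := by
  have h : |2 * t * ⟪v₁, v₂⟫| ≤ |t| * ‖v₁‖ ^ 2 := by
    rw [abs_mul, abs_mul, abs_two, mul_comm 2, mul_assoc]
    exact mul_le_mul_of_nonneg_left hsr (abs_nonneg t)
  linarith [neg_abs_le (2 * t * ⟪v₁, v₂⟫)]

theorem mul_norm_sq_le_norm_smul_add_smul_sq_sub {v₁ v₂ : V} (h12 : ‖v₁‖ ^ 2 ≤ ‖v₂‖ ^ 2)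
    (hsr : 2 * |⟪v₁, v₂⟫| ≤ ‖v₁‖ ^ 2) {t₁ t₂ : ℝ} (ht₂ : 1 ≤ t₂ ^ 2) :
    (t₁ ^ 2 - |t₁ * t₂| + t₂ ^ 2 - 1) * ‖v₁‖ ^ 2 ≤ ‖t₁ • v₁ + t₂ • v₂‖ ^ 2 - ‖v₂‖ ^ 2 := by
  have hc : (t₂ ^ 2 - 1) * ‖v₁‖ ^ 2 ≤ (t₂ ^ 2 - 1) * ‖v₂‖ ^ 2 :=
    mul_le_mul_of_nonneg_left h12 (by linarith)
  rw [norm_smul_add_smul_sq]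
  linarith [neg_mul_abs_le_two_mul_inner hsr (t₁ * t₂)]

theorem two_mul_abs_inner_eq_of_norm_smul_add_smul_sq_le {v₁ v₂ : V}
    (hsr : 2 * |⟪v₁, v₂⟫| ≤ ‖v₁‖ ^ 2) {t₁ t₂ : ℝ} (ht₁ : |t₁| = 1) (ht₂ : |t₂| = 1)
    (h : ‖t₁ • v₁ + t₂ • v₂‖ ^ 2 ≤ ‖v₂‖ ^ 2) :
    2 * |⟪v₁, v₂⟫| = ‖v₁‖ ^ 2 ∧ ‖t₁ • v₁ + t₂ • v₂‖ ^ 2 = ‖v₂‖ ^ 2 := by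
  have ht : |t₁ * t₂| = 1 := by rw [abs_mul, ht₁, ht₂, one_mul]
  have hcross_lower := neg_mul_abs_le_two_mul_inner hsr (t₁ * t₂)
  have hcross_upper : -(2 * (t₁ * t₂) * ⟪v₁, v₂⟫) ≤ 2 * |⟪v₁, v₂⟫| := by
    have : |2 * (t₁ * t₂) * ⟪v₁, v₂⟫| = 2 * |⟪v₁, v₂⟫| := by
      rw [abs_mul, abs_mul, ht, abs_two, mul_one]
    exact this ▸ neg_le_abs _
  rw [ht, one_mul] at hcross_lower
  rw [norm_smul_add_smul_sq, ← sq_abs t₁, ← sq_abs t₂, ht₁, ht₂, one_pow, one_mul,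
    one_mul] at h ⊢
  constructor <;> linarith

end InnerProductSpace

theorem Int.abs_eq_one_of_sq_sub_abs_mul_add_sq_le_one {m n : ℤ} (hm : m ≠ 0) (hn : n ≠ 0)
    (h : m ^ 2 - |m * n| + n ^ 2 ≤ 1) : |m| = 1 ∧ |n| = 1 := by
  have hm1 := Int.one_le_abs hm
  have hn1 := Int.one_le_abs hn
  rw [abs_mul, ← sq_abs m, ← sq_abs n] at h
  constructor <;> nlinarith

/-- Let `v₁, v₂` be vectors in a real inner product space with `0 < ‖v₁‖² ≤ ‖v₂‖²` and
`2|⟪v₁, v₂⟫| ≤ ‖v₁‖²`.  If `x₁, x₂` are nonzero integers with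
`‖x₁·v₁ + x₂·v₂‖² ≤ ‖v₂‖²`, then `x₁ = ±1`, `x₂ = ±1`, `2|⟪v₁, v₂⟫| = ‖v₁‖²` and
`‖x₁·v₁ + x₂·v₂‖² = ‖v₂‖²`. -/
theorem stmt_17 {V : Type*} [NormedAddCommGroup V] [InnerProductSpace ℝ V]
    (v₁ v₂ : V) (h0 : 0 < ‖v₁‖ ^ 2) (h12 : ‖v₁‖ ^ 2 ≤ ‖v₂‖ ^ 2)
    (hsr : 2 * |⟪v₁, v₂⟫| ≤ ‖v₁‖ ^ 2)
    (x₁ x₂ : ℤ) (hx₁ : x₁ ≠ 0) (hx₂ : x₂ ≠ 0)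
    (h : ‖x₁ • v₁ + x₂ • v₂‖ ^ 2 ≤ ‖v₂‖ ^ 2) :
    (x₁ = 1 ∨ x₁ = -1) ∧ (x₂ = 1 ∨ x₂ = -1) ∧ 2 * |⟪v₁, v₂⟫| = ‖v₁‖ ^ 2 ∧
      ‖x₁ • v₁ + x₂ • v₂‖ ^ 2 = ‖v₂‖ ^ 2 := by
  rw [← Int.cast_smul_eq_zsmul ℝ x₁, ← Int.cast_smul_eq_zsmul ℝ x₂] at h ⊢
  have hx₂_sq : (1 : ℝ) ≤ (x₂ : ℝ) ^ 2 :=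
    mod_cast (one_le_sq_iff_one_le_abs _).mpr (Int.one_le_abs hx₂)
  have hform : (x₁ : ℝ) ^ 2 - |(x₁ : ℝ) * x₂| + (x₂ : ℝ) ^ 2 - 1 ≤ 0 :=
    nonpos_of_mul_nonpos_left
      ((mul_norm_sq_le_norm_smul_add_smul_sq_sub h12 hsr hx₂_sq).trans (by linarith)) h0
  obtain ⟨habs₁, habs₂⟩ : |x₁| = 1 ∧ |x₂| = 1 :=
    Int.abs_eq_one_of_sq_sub_abs_mul_add_sq_le_one hx₁ hx₂
      (by exact_mod_cast sub_nonpos.mp hform)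
  have hcast₁ : |(x₁ : ℝ)| = 1 := by rw [← Int.cast_abs, habs₁, Int.cast_one]
  have hcast₂ : |(x₂ : ℝ)| = 1 := by rw [← Int.cast_abs, habs₂, Int.cast_one]
  exact ⟨(abs_eq zero_le_one).mp habs₁, (abs_eq zero_le_one).mp habs₂,
    two_mul_abs_inner_eq_of_norm_smul_add_smul_sq_le hsr hcast₁ hcast₂ h⟩
end

section
/- Let p and q be primes with p ≡ 3 (mod 4), q ≡ 3 (mod 8), and let r' be an integer with r'² + p ≡ 0 (mod 4q). Work in B = ℍ[ℚ, −q, −p] with basis 1, i, j, k (i² = −q, j² = −p, k = ij), and let M be the ℤ-span of {1, (1+j)/2, i, (r'·i − k)/(2q)}. Then: (a) the Gross lattice {2x − trd(x) : x ∈ M} equals the ℤ-span of {2i, (r'·i − k)/q, j}; (b) with pairing (x, y) = (1/2)·trd(x·ȳ), the element j is orthogonal to both 2i and (r'·i − k)/q; (c) the Gram matrix of (2i, (r'·i − k)/q) is [[4q, 2r'], [2r', (r'² + p)/q]], whose determinant is 4p; consequently (d) the Gram determinant of the basis (2i, (r'·i − k)/q, j) is 4p². In particular the Gross lattice is the orthogonal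 direct sum of the rank-2 lattice spanned by 2i and (r'·i − k)/q, of determinant 4p, and ℤ·j. -/
open scoped Quaternion

/-!
Since `2x - trd x = x - x̄` is additive, the Gross lattice of a `ℤ`-span is the span of the images
of the generators, which are `0, j, 2i, (r'i - k)/q`. On pure quaternions of `ℍ[R, c₁, c₂]` the
pairing `(x * ȳ).re` is the diagonal form `-c₁ x₁y₁ - c₂ x₂y₂ + c₁c₂ x₃y₃` in the basis `i, j, k`,
so with `c₁ = -q`, `c₂ = -p` every Gram entry is read off the coordinates
`2i = (2, 0, 0)`, `(r'i - k)/q = (r'/q, 0, -1/q)` and `j = (0, 1, 0)`.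
-/

theorem setOf_two_mul_sub_add_star_eq_span {A : Type*} [Ring A] [StarRing A] (s : Set A) :
    {y | ∃ x ∈ Submodule.span ℤ s, y = 2 * x - (x + star x)} =
      Submodule.span ℤ ((fun x => x - star x) '' s) := by
  let f : A →ₗ[ℤ] A :=
    (AddMonoidHom.id A - (starAddEquiv : A ≃+ A).toAddMonoidHom).toIntLinearMap
  rw [← show f '' s = (fun x => x - star x) '' s from rfl, ← Submodule.map_span]
  ext y
  simp only [Set.mem_ofPred_eq, Submodule.map_coe, Set.mem_image, SetLike.mem_coe,
    eq_comm (a := y)]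
  refine exists_congr fun x => and_congr_right fun _ => ?_
  rw [two_mul, add_sub_add_left_eq_sub]
  rfl

namespace QuaternionAlgebra

variable {R : Type*} [CommRing R] {c₁ c₂ : R}

theorem mk_sub_star_mk (a b c d : R) :
    (⟨a, b, c, d⟩ : ℍ[R, c₁, c₂]) - star ⟨a, b, c, d⟩ = ⟨0, 2 * b, 2 * c, 2 * d⟩ := by
  rw [star_mk, mk_sub_mk]
  ext <;> simp <;> ring

theorem re_mk_mul_star_mk (x₁ x₂ x₃ y₁ y₂ y₃ : R) :
    ((⟨0, x₁, x₂, x₃⟩ : ℍ[R, c₁, c₂]) * star ⟨0, y₁, y₂, y₃⟩).re =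
      -c₁ * x₁ * y₁ - c₂ * x₂ * y₂ + c₁ * c₂ * x₃ * y₃ := by
  rw [star_mk, mk_mul_mk]
  simp only [mul_zero, zero_mul, add_zero, mul_neg]
  ring

theorem mk_i_mul_mk_j : (⟨0, 1, 0, 0⟩ : ℍ[R, c₁, c₂]) * ⟨0, 0, 1, 0⟩ = ⟨0, 0, 0, 1⟩ := by
  rw [mk_mul_mk]
  ext <;> simp

end QuaternionAlgebra

open QuaternionAlgebra in
theorem stmt_18_general (p q : ℕ) (hq : q.Prime) (r : ℤ)
    (i j k : ℍ[ℚ, -(q : ℚ), -(p : ℚ)])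
    (hi : i = ⟨0, 1, 0, 0⟩) (hj : j = ⟨0, 0, 1, 0⟩) (hk : k = i * j)
    (M : Submodule ℤ ℍ[ℚ, -(q : ℚ), -(p : ℚ)])
    (hM : M = Submodule.span ℤ
      ({1, ((1 : ℚ)/2) • (1 + j), i, ((1 : ℚ)/(2 * q)) • ((r : ℚ) • i - k)} :
        Set ℍ[ℚ, -(q : ℚ), -(p : ℚ)]))
    (g : ℍ[ℚ, -(q : ℚ), -(p : ℚ)]) (hg : g = ((1 : ℚ)/(q : ℚ)) • ((r : ℚ) • i - k)) :
    -- (a) the Gross lattice of `M` is spanned by `2i`, `(r'i - k)/q`, `j`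
    {y | ∃ x ∈ M, y = 2 * x - (x + star x)} =
      (Submodule.span ℤ ({2 * i, g, j} : Set ℍ[ℚ, -(q : ℚ), -(p : ℚ)]) :
        Set ℍ[ℚ, -(q : ℚ), -(p : ℚ)]) ∧
    -- (b) `j` is orthogonal to `2i` and `(r'i - k)/q`
    (j * star (2 * i)).re = 0 ∧ (j * star g).re = 0 ∧
    -- (c) the Gram matrix of `(2i, (r'i - k)/q)` and its determinant
    ((2 * i) * star (2 * i)).re = 4 * (q : ℚ) ∧
    ((2 * i) * star g).re = 2 * (r : ℚ) ∧
    (g * star g).re = ((r : ℚ) ^ 2 + (p : ℚ)) / (q : ℚ) ∧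
    (4 * (q : ℚ)) * (((r : ℚ) ^ 2 + (p : ℚ)) / (q : ℚ)) - (2 * (r : ℚ)) ^ 2 = 4 * (p : ℚ) ∧
    -- (d) the Gram determinant of the basis `(2i, (r'i - k)/q, j)` is `4p²`
    (Matrix.of fun a b : Fin 3 =>
        ((![2 * i, g, j] a) * star (![2 * i, g, j] b)).re).det = 4 * (p : ℚ) ^ 2 := by
  have hq0 : (q : ℚ) ≠ 0 := mod_cast hq.ne_zero
  have hk' : k = ⟨0, 0, 0, 1⟩ := by rw [hk, hi, hj, mk_i_mul_mk_j]
  have h2i : 2 * i = ⟨0, 2, 0, 0⟩ := by rw [hi]; ext <;> simp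
  have hg' : g = ⟨0, r / q, 0, -1 / q⟩ := by rw [hg, hi, hk']; ext <;> simp <;> ring
  have gross : {y | ∃ x ∈ M, y = 2 * x - (x + star x)} =
      (Submodule.span ℤ ({2 * i, g, j} : Set ℍ[ℚ, -(q : ℚ), -(p : ℚ)]) : Set _) := by
    have e₁ : (1 : ℍ[ℚ, -(q : ℚ), -(p : ℚ)]) - star 1 = 0 := by rw [star_one, sub_self]
    have e₂ : ((1 : ℚ)/2) • (1 + j) - star (((1 : ℚ)/2) • (1 + j)) = j := by
      rw [show ((1 : ℚ)/2) • (1 + j) = ⟨1/2, 0, 1/2, 0⟩ by rw [hj]; ext <;> simp,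
        mk_sub_star_mk, hj]
      norm_num
    have e₃ : i - star i = 2 * i := by rw [h2i, hi, mk_sub_star_mk, mul_one, mul_zero]
    have e₄ : ((1 : ℚ)/(2 * q)) • ((r : ℚ) • i - k) -
        star (((1 : ℚ)/(2 * q)) • ((r : ℚ) • i - k)) = g := by
      rw [show ((1 : ℚ)/(2 * q)) • ((r : ℚ) • i - k) = ⟨0, r / (2 * q), 0, -1 / (2 * q)⟩ by
          rw [hi, hk']; ext <;> simp <;> ring,
        mk_sub_star_mk, hg']
      ext <;> simp <;> field_simp
    rw [hM, setOf_two_mul_sub_add_star_eq_span]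
    simp only [Set.image_insert_eq, Set.image_singleton, e₁, e₂, e₃, e₄,
      Submodule.span_insert_zero]
    rw [Set.insert_comm j, Set.pair_comm j]
  have gram : Matrix.of (fun a b : Fin 3 => ((![2 * i, g, j] a) * star (![2 * i, g, j] b)).re) =
      !![4 * (q : ℚ), 2 * r, 0; 2 * r, (r ^ 2 + p) / q, 0; 0, 0, p] := by
    ext a b
    fin_cases a <;> fin_cases b <;>
      simp only [Fin.zero_eta, Fin.mk_one, Fin.reduceFinMk, Matrix.of_apply, Matrix.cons_val,
        h2i, hg', hj, re_mk_mul_star_mk] <;> field_simp <;> ring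
  have entry (a b : Fin 3) := congrFun (congrFun gram a) b
  refine ⟨gross, entry 2 0, entry 2 1, entry 0 0, entry 0 1, entry 1 1, by field_simp; ring, ?_⟩
  rw [gram, Matrix.det_fin_three]
  simp only [Matrix.of_apply, Matrix.cons_val', Matrix.cons_val_zero, Matrix.cons_val_fin_one,
    Matrix.cons_val_one, Matrix.cons_val, mul_zero, sub_zero, add_zero, zero_mul]
  field_simp
  ring

/-- Ibukiyama's order `O'(q)`: for primes `p ≡ 3 (mod 4)`, `q ≡ 3 (mod 8)` and an integer
`r'` with `r'² + p ≡ 0 (mod 4q)`, in `B = ℍ[ℚ, -q, -p]` the Gross lattice of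
`M = ⟨1, (1+j)/2, i, (r'i - k)/(2q)⟩` is spanned by `{2i, (r'i - k)/q, j}`; the vector `j` is
orthogonal to the other two; the Gram matrix of `(2i, (r'i - k)/q)` is
`[[4q, 2r'], [2r', (r'² + p)/q]]` of determinant `4p`; and the Gram determinant of the full
basis is `4p²`. -/
theorem stmt_18 (p q : ℕ) (hp : p.Prime) (hq : q.Prime)
    (hp4 : p % 4 = 3) (hq8 : q % 8 = 3) (r : ℤ) (hr : (r ^ 2 + (p : ℤ)) % (4 * (q : ℤ)) = 0)
    (i j k : ℍ[ℚ, -(q : ℚ), -(p : ℚ)])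
    (hi : i = ⟨0, 1, 0, 0⟩) (hj : j = ⟨0, 0, 1, 0⟩) (hk : k = i * j)
    (M : Submodule ℤ ℍ[ℚ, -(q : ℚ), -(p : ℚ)])
    (hM : M = Submodule.span ℤ
      ({1, ((1 : ℚ)/2) • (1 + j), i, ((1 : ℚ)/(2 * q)) • ((r : ℚ) • i - k)} :
        Set ℍ[ℚ, -(q : ℚ), -(p : ℚ)]))
    (g : ℍ[ℚ, -(q : ℚ), -(p : ℚ)]) (hg : g = ((1 : ℚ)/(q : ℚ)) • ((r : ℚ) • i - k)) :
    -- (a) the Gross lattice of `M` is spanned by `2i`, `(r'i - k)/q`, `j`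
    {y | ∃ x ∈ M, y = 2 * x - (x + star x)} =
      (Submodule.span ℤ ({2 * i, g, j} : Set ℍ[ℚ, -(q : ℚ), -(p : ℚ)]) :
        Set ℍ[ℚ, -(q : ℚ), -(p : ℚ)]) ∧
    -- (b) `j` is orthogonal to `2i` and `(r'i - k)/q`
    (j * star (2 * i)).re = 0 ∧ (j * star g).re = 0 ∧
    -- (c) the Gram matrix of `(2i, (r'i - k)/q)` and its determinant
    ((2 * i) * star (2 * i)).re = 4 * (q : ℚ) ∧
    ((2 * i) * star g).re = 2 * (r : ℚ) ∧
    (g * star g).re = ((r : ℚ) ^ 2 + (p : ℚ)) / (q : ℚ) ∧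
    (4 * (q : ℚ)) * (((r : ℚ) ^ 2 + (p : ℚ)) / (q : ℚ)) - (2 * (r : ℚ)) ^ 2 = 4 * (p : ℚ) ∧
    -- (d) the Gram determinant of the basis `(2i, (r'i - k)/q, j)` is `4p²`
    (Matrix.of fun a b : Fin 3 =>
        ((![2 * i, g, j] a) * star (![2 * i, g, j] b)).re).det = 4 * (p : ℚ) ^ 2 :=
  stmt_18_general p q hq r i j k hi hj hk M hM g hg
end
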